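/- arXiv:1512.04714 — 10 statements merged into one kernel-verified Lean document; each statement's English description precedes it below -/
import Mathlib

section
/- Let z₀ > 0. Assume ∫_{(-∞,-1]} |y| e^{z₀|y|} ν(dy) < ∞ and ∫_{[1,∞)} |y| ν(dy) < ∞, so that J′(z) is finite for every z ∈ [0, z₀]. Then J′ is Lipschitz continuous on the interval [0, z₀] if and only if ∫_{(-∞,-1]} y² e^{z₀|y|} ν(dy) < ∞ and ∫_{[1,∞)} y² ν(dy) < ∞. -/
open MeasureTheory

/-- The derivative of the Laplace exponent of the Lévy process with
characteristics `(a, q, ν)`: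
`J′(z) = −a + qz + ∫ y (𝟙_{(−1,1)}(y) − e^{−zy}) ν(dy)`. -/
noncomputable def Jprime (ν : Measure ℝ) (a q : ℝ) (z : ℝ) : ℝ :=
  -a + q * z + ∫ y, y * ((Set.Ioo (-1 : ℝ) 1).indicator 1 y - Real.exp (-(z * y))) ∂ν

/-!
For fixed `y` the integrand `z ↦ y (𝟙_{(−1,1)}(y) − e^{−zy})` is increasing with derivative
`y² e^{−zy}`, which on `[0, z₀]` is at most `y² (1 + e^{−z₀y})`. If this bound is `ν`-integrable,
the mean value theorem under the integral makes `J′` Lipschitz. Conversely, a Lipschitz constant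
`K` bounds the integrals of the nonnegative difference quotients at the endpoints `0` and `z₀`,
so by Fatou's lemma `∫ y² dν ≤ K` and `∫ y² e^{−z₀y} dν ≤ K`. On the tails these are the two
stated integrability conditions, and on `(−1, 1)` both are controlled by `∫ (y² ∧ 1) dν`.
-/

open Real Set Filter Topology
open scoped NNReal

theorem lipschitzOnWith_integral_of_dist_le {X α E : Type*} [PseudoMetricSpace X]
    [MeasurableSpace α] {μ : Measure α} [NormedAddCommGroup E] [NormedSpace ℝ E]
    {f : X → α → E} {H : α → ℝ} {s : Set X} (hf : ∀ x ∈ s, Integrable (f x) μ)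
    (hH : Integrable H μ)
    (hdist : ∀ x ∈ s, ∀ x' ∈ s, ∀ y, dist (f x y) (f x' y) ≤ H y * dist x x') :
    LipschitzOnWith (∫ y, H y ∂μ).toNNReal (fun x => ∫ y, f x y ∂μ) s := by
  refine LipschitzOnWith.of_dist_le' fun x hx x' hx' => ?_
  calc dist (∫ y, f x y ∂μ) (∫ y, f x' y ∂μ) = ‖∫ y, (f x y - f x' y) ∂μ‖ := by
        rw [dist_eq_norm, integral_sub (hf x hx) (hf x' hx')]
    _ ≤ ∫ y, H y * dist x x' ∂μ :=
        norm_integral_le_of_norm_le (hH.mul_const _)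
          (ae_of_all _ fun y => by simpa only [← dist_eq_norm] using hdist x hx x' hx' y)
    _ = (∫ y, H y ∂μ) * dist x x' := integral_mul_const _ _

theorem integrable_of_hasDerivWithinAt_of_lipschitzOnWith {μ : Measure ℝ} {f : ℝ → ℝ → ℝ}
    {f' : ℝ → ℝ} {s : Set ℝ} {z : ℝ} {K : ℝ≥0} (hz : z ∈ s) (hz' : z ∈ closure (s \ {z}))
    (hmono : ∀ y, MonotoneOn (f · y) s) (hf' : ∀ y, HasDerivWithinAt (f · y) (f' y) s z)
    (hf : ∀ t ∈ s, Integrable (f t) μ) (hK : LipschitzOnWith K (fun t => ∫ y, f t y ∂μ) s) :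
    Integrable f' μ := by
  obtain ⟨t, hts, ht⟩ := mem_closure_iff_seq_limit.1 hz'
  have ht' : Tendsto t atTop (𝓝[s \ {z}] z) := tendsto_nhdsWithin_iff.2 ⟨ht, .of_forall hts⟩
  set ψ : ℕ → ℝ → ℝ := fun n y => slope (f · y) z (t n)
  have hψ_int : ∀ n, Integrable (ψ n) μ := fun n => by
    simpa only [ψ, slope_def_field, div_eq_inv_mul, Pi.sub_apply] using
      ((hf _ (hts n).1).sub (hf z hz)).const_mul (t n - z)⁻¹
  have hψ_nonneg : ∀ n, 0 ≤ ψ n := fun n y => (hmono y).slope_nonneg hz (hts n).1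
  have hψ_le : ∀ n, ∫ y, ψ n y ∂μ ≤ K := fun n => by
    have hdist := hK.dist_le_mul _ (hts n).1 _ hz
    rw [Real.dist_eq, Real.dist_eq, ← integral_sub (hf _ (hts n).1) (hf z hz)] at hdist
    calc ∫ y, ψ n y ∂μ = (∫ y, (f (t n) y - f z y) ∂μ) / (t n - z) := by
          simp only [ψ, slope_def_field, integral_div]
      _ ≤ K := (le_abs_self _).trans <| by
          rw [abs_div]; exact div_le_of_le_mul₀ (abs_nonneg _) K.2 hdist
  have hψ_lintegral : ∀ n, ∫⁻ y, ‖ψ n y‖ₑ ∂μ ≤ ENNReal.ofReal K := fun n => by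
    rw [lintegral_enorm_of_nonneg (hψ_nonneg n), ← ofReal_integral_eq_lintegral_ofReal (hψ_int n)
      (ae_of_all _ (hψ_nonneg n))]
    exact ENNReal.ofReal_le_ofReal (hψ_le n)
  exact integrable_of_tendsto (G := ψ)
    (ae_of_all _ fun y => (hasDerivWithinAt_iff_tendsto_slope.1 (hf' y)).comp ht')
    (fun n => (hψ_int n).aestronglyMeasurable)
    (ne_top_of_le_ne_top ENNReal.ofReal_ne_top
      (liminf_le_of_frequently_le' (.of_forall hψ_lintegral)))

theorem integrable_of_integrableOn_Iic_Ioo_Ici {α E : Type*} [MeasurableSpace α] {μ : Measure α}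
    [NormedAddCommGroup E] [LinearOrder α] [TopologicalSpace α] [OrderClosedTopology α]
    {f : α → E} {a b : α} (hab : a < b)
    (h₁ : IntegrableOn f (Iic a) μ) (h₂ : IntegrableOn f (Ioo a b) μ)
    (h₃ : IntegrableOn f (Ici b) μ) :
    Integrable f μ := by
  rw [← integrableOn_univ, ← Iic_union_Ioi, ← Ioo_union_Ici_eq_Ioi hab]
  exact h₁.union (h₂.union h₃)

section Jprime

noncomputable def jprimeIntegrand (z y : ℝ) : ℝ :=
  y * ((Ioo (-1 : ℝ) 1).indicator 1 y - exp (-(z * y)))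

theorem jprime_eq (ν : Measure ℝ) (a q : ℝ) :
    Jprime ν a q = fun z => (-a + q * z) + ∫ y, jprimeIntegrand z y ∂ν := rfl

theorem measurable_jprimeIntegrand (z : ℝ) : Measurable (jprimeIntegrand z) :=
  measurable_id.mul ((measurable_one.indicator measurableSet_Ioo).sub (by fun_prop))

theorem hasDerivAt_jprimeIntegrand (z y : ℝ) :
    HasDerivAt (jprimeIntegrand · y) (y ^ 2 * exp (-(z * y))) z := by
  have h : HasDerivAt (fun t => -(t * y)) (-y) z := (hasDerivAt_mul_const y).neg
  exact ((h.exp.const_sub _).const_mul y).congr_deriv (by ring)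

theorem monotone_jprimeIntegrand (y : ℝ) : Monotone (jprimeIntegrand · y) :=
  monotone_of_hasDerivAt_nonneg (fun z => hasDerivAt_jprimeIntegrand z y) fun z => by positivity

theorem exp_neg_mul_le_one_add {z₀ t : ℝ} (ht : t ∈ Icc 0 z₀) (y : ℝ) :
    exp (-(t * y)) ≤ 1 + exp (-(z₀ * y)) := by
  rcases le_total 0 y with hy | hy
  · linarith [exp_le_one_iff.2 (neg_nonpos.2 (mul_nonneg ht.1 hy)), exp_pos (-(z₀ * y))]
  · linarith [exp_le_exp.2 (show -(t * y) ≤ -(z₀ * y) by nlinarith [ht.2])]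

theorem dist_jprimeIntegrand_le {z₀ z w : ℝ} (hz : z ∈ Icc 0 z₀) (hw : w ∈ Icc 0 z₀) (y : ℝ) :
    dist (jprimeIntegrand z y) (jprimeIntegrand w y) ≤
      y ^ 2 * (1 + exp (-(z₀ * y))) * dist z w := by
  simpa only [dist_eq_norm] using (convex_Icc 0 z₀).norm_image_sub_le_of_norm_hasDerivWithin_le
    (fun t _ => (hasDerivAt_jprimeIntegrand t y).hasDerivWithinAt) (fun t ht => by
      rw [Real.norm_of_nonneg (by positivity)]
      exact mul_le_mul_of_nonneg_left (exp_neg_mul_le_one_add ht y) (sq_nonneg y)) hw hz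

theorem exists_lipschitzOnWith_jprime_iff (ν : Measure ℝ) (a q : ℝ) (s : Set ℝ) :
    (∃ K, LipschitzOnWith K (Jprime ν a q) s) ↔
      ∃ K, LipschitzOnWith K (fun z => ∫ y, jprimeIntegrand z y ∂ν) s := by
  have hL : LipschitzOnWith ‖q‖₊ (fun z : ℝ => -a + q * z) s := by
    simpa using ((LipschitzWith.const (-a)).add (lipschitzWith_smul q)).lipschitzOnWith
  constructor
  · rintro ⟨K, hK⟩
    exact ⟨K + ‖q‖₊, by simpa [jprime_eq] using hK.sub hL⟩
  · rintro ⟨K, hK⟩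
    exact ⟨‖q‖₊ + K, hL.add hK⟩

variable {ν : Measure ℝ}

theorem integrableOn_Ioo_sq_mul_one_add_exp (hν : ∫⁻ y, ENNReal.ofReal (min (y ^ 2) 1) ∂ν < ⊤)
    (z₀ : ℝ) : IntegrableOn (fun y => y ^ 2 * (1 + exp (-(z₀ * y)))) (Ioo (-1) 1) ν := by
  have hmin : Integrable (fun y => min (y ^ 2) 1) ν :=
    ⟨by fun_prop, (hasFiniteIntegral_iff_ofReal (ae_of_all _ fun y => by positivity)).2 hν⟩
  refine ((hmin.const_mul (1 + exp |z₀|)).integrableOn).mono' (by fun_prop)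
    (ae_restrict_of_forall_mem measurableSet_Ioo fun y hy => ?_)
  have hy : |y| ≤ 1 := (abs_lt.2 hy).le
  have hexp : exp (-(z₀ * y)) ≤ exp |z₀| := exp_le_exp.2 <| (neg_le_abs _).trans <| by
    rw [abs_mul]; exact mul_le_of_le_one_right (abs_nonneg z₀) hy
  rw [min_eq_left (by nlinarith [sq_abs y, abs_nonneg y]), Real.norm_of_nonneg (by positivity),
    mul_comm]
  gcongr

theorem abs_jprimeIntegrand_of_notMem {y : ℝ} (hy : y ∉ Ioo (-1) 1) (z : ℝ) :
    |jprimeIntegrand z y| = |y| * exp (-(z * y)) := by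
  simp [jprimeIntegrand, indicator_of_notMem hy, abs_mul]

theorem integrable_jprimeIntegrand (hν : ∫⁻ y, ENNReal.ofReal (min (y ^ 2) 1) ∂ν < ⊤) {z₀ z : ℝ}
    (h1 : IntegrableOn (fun y => |y| * exp (z₀ * |y|)) (Iic (-1)) ν)
    (h2 : IntegrableOn (fun y => |y|) (Ici 1) ν) (hz : z ∈ Icc 0 z₀) :
    Integrable (jprimeIntegrand z) ν := by
  have hmeas := (measurable_jprimeIntegrand z).aestronglyMeasurable (μ := ν)
  refine integrable_of_integrableOn_Iic_Ioo_Ici (neg_one_lt_zero.trans one_pos)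
    (h1.mono' hmeas.restrict (ae_restrict_of_forall_mem measurableSet_Iic fun y hy => ?_))
    (((integrableOn_Ioo_sq_mul_one_add_exp hν z₀).mul_const z₀).mono' hmeas.restrict
      (ae_restrict_of_forall_mem measurableSet_Ioo fun y hy => ?_))
    (h2.mono' hmeas.restrict (ae_restrict_of_forall_mem measurableSet_Ici fun y hy => ?_))
  · have hy0 : y ≤ 0 := (mem_Iic.1 hy).trans (by norm_num)
    rw [Real.norm_eq_abs, abs_jprimeIntegrand_of_notMem (fun h => h.1.not_ge hy),
      abs_of_nonpos hy0]
    exact mul_le_mul_of_nonneg_left (exp_le_exp.2 (by nlinarith [hz.2])) (neg_nonneg.2 hy0)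
  · have h0 : jprimeIntegrand 0 y = 0 := by simp [jprimeIntegrand, indicator_of_mem hy]
    calc ‖jprimeIntegrand z y‖ = dist (jprimeIntegrand z y) (jprimeIntegrand 0 y) := by
          rw [h0, dist_zero_right]
      _ ≤ y ^ 2 * (1 + exp (-(z₀ * y))) * dist z 0 :=
          dist_jprimeIntegrand_le hz (left_mem_Icc.2 (hz.1.trans hz.2)) y
      _ ≤ y ^ 2 * (1 + exp (-(z₀ * y))) * z₀ := by
          rw [Real.dist_0_eq_abs, abs_of_nonneg hz.1]
          gcongr
          exact hz.2
  · rw [Real.norm_eq_abs, abs_jprimeIntegrand_of_notMem (fun h => h.2.not_ge hy)]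
    exact mul_le_of_le_one_right (abs_nonneg y)
      (exp_le_one_iff.2 (neg_nonpos.2 (mul_nonneg hz.1 (zero_le_one.trans hy))))

theorem integrableOn_tails_iff_integrable (hν : ∫⁻ y, ENNReal.ofReal (min (y ^ 2) 1) ∂ν < ⊤)
    {z₀ : ℝ} (hz₀ : 0 ≤ z₀) :
    (IntegrableOn (fun y => y ^ 2 * exp (z₀ * |y|)) (Iic (-1)) ν ∧
      IntegrableOn (fun y => y ^ 2) (Ici 1) ν) ↔
      Integrable (fun y => y ^ 2 * (1 + exp (-(z₀ * y)))) ν := by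
  constructor
  · rintro ⟨hl, hr⟩
    refine integrable_of_integrableOn_Iic_Ioo_Ici (neg_one_lt_zero.trans one_pos)
      ((hl.const_mul 2).mono' (by fun_prop)
        (ae_restrict_of_forall_mem measurableSet_Iic fun y hy => ?_))
      (integrableOn_Ioo_sq_mul_one_add_exp hν z₀)
      ((hr.const_mul 2).mono' (by fun_prop)
        (ae_restrict_of_forall_mem measurableSet_Ici fun y hy => ?_))
    · have hy0 : y ≤ 0 := (mem_Iic.1 hy).trans (by norm_num)
      rw [Real.norm_of_nonneg (by positivity), abs_of_nonpos hy0, mul_neg]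
      nlinarith [one_le_exp (neg_nonneg.2 (mul_nonpos_of_nonneg_of_nonpos hz₀ hy0)), sq_nonneg y]
    · have hexp : exp (-(z₀ * y)) ≤ 1 :=
        exp_le_one_iff.2 (neg_nonpos.2 (mul_nonneg hz₀ (zero_le_one.trans hy)))
      rw [Real.norm_of_nonneg (by positivity)]
      nlinarith [sq_nonneg y]
  · intro hH
    refine ⟨hH.integrableOn.mono' (by fun_prop)
        (ae_restrict_of_forall_mem measurableSet_Iic fun y hy => ?_),
      (hH.mono' (by fun_prop) (ae_of_all _ fun y => ?_)).integrableOn⟩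
    · rw [Real.norm_of_nonneg (by positivity), abs_of_nonpos ((mem_Iic.1 hy).trans (by norm_num)),
        mul_neg]
      nlinarith [sq_nonneg y]
    · rw [Real.norm_of_nonneg (by positivity)]
      nlinarith [sq_nonneg y, exp_pos (-(z₀ * y))]

end Jprime

theorem jprime_lipschitzOn_iff_general (ν : Measure ℝ) (a q z₀ : ℝ) (hz₀ : 0 < z₀)
    (hν : ∫⁻ y, ENNReal.ofReal (min (y ^ 2) 1) ∂ν < ⊤)
    (h1 : IntegrableOn (fun y => |y| * Real.exp (z₀ * |y|)) (Set.Iic (-1)) ν)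
    (h2 : IntegrableOn (fun y => |y|) (Set.Ici 1) ν) :
    (∃ K : NNReal, LipschitzOnWith K (Jprime ν a q) (Set.Icc 0 z₀)) ↔
      (IntegrableOn (fun y => y ^ 2 * Real.exp (z₀ * |y|)) (Set.Iic (-1)) ν ∧
        IntegrableOn (fun y => y ^ 2) (Set.Ici 1) ν) := by
  rw [exists_lipschitzOnWith_jprime_iff, integrableOn_tails_iff_integrable hν hz₀.le]
  have hint : ∀ z ∈ Icc 0 z₀, Integrable (jprimeIntegrand z) ν :=
    fun z hz => integrable_jprimeIntegrand hν h1 h2 hz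
  constructor
  · rintro ⟨K, hK⟩
    have hderiv {z : ℝ} (hz : z ∈ Icc 0 z₀) (hz' : z ∈ closure (Icc 0 z₀ \ {z})) :
        Integrable (fun y => y ^ 2 * exp (-(z * y))) ν :=
      integrable_of_hasDerivWithinAt_of_lipschitzOnWith hz hz'
        (fun y => (monotone_jprimeIntegrand y).monotoneOn _)
        (fun y => (hasDerivAt_jprimeIntegrand z y).hasDerivWithinAt) hint hK
    have hleft := left_mem_Icc.2 hz₀.le
    have hright := right_mem_Icc.2 hz₀.le
    have h0 := hderiv hleft (by rwa [Icc_sdiff_left, closure_Ioc hz₀.ne])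
    have hz₀' := hderiv hright (by rwa [Icc_sdiff_right, closure_Ico hz₀.ne])
    refine (h0.add hz₀').congr (.of_forall fun y => ?_)
    simp only [Pi.add_apply, zero_mul, neg_zero, exp_zero]
    ring
  · intro hH
    exact ⟨_, lipschitzOnWith_integral_of_dist_le hint hH fun z hz w hw =>
      dist_jprimeIntegrand_le hz hw⟩

/-- `J′` is Lipschitz on `[0, z₀]` iff
`∫_{(-∞,-1]} y² e^{z₀|y|} ν(dy) < ∞` and `∫_{[1,∞)} y² ν(dy) < ∞`. -/
theorem jprime_lipschitzOn_iff (ν : Measure ℝ) (a q z₀ : ℝ) (hq : 0 ≤ q) (hz₀ : 0 < z₀)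
    (hν : ∫⁻ y, ENNReal.ofReal (min (y ^ 2) 1) ∂ν < ⊤)
    (h1 : IntegrableOn (fun y => |y| * Real.exp (z₀ * |y|)) (Set.Iic (-1)) ν)
    (h2 : IntegrableOn (fun y => |y|) (Set.Ici 1) ν) :
    (∃ K : NNReal, LipschitzOnWith K (Jprime ν a q) (Set.Icc 0 z₀)) ↔
      (IntegrableOn (fun y => y ^ 2 * Real.exp (z₀ * |y|)) (Set.Iic (-1)) ν ∧
        IntegrableOn (fun y => y ^ 2) (Set.Ici 1) ν) :=
  jprime_lipschitzOn_iff_general ν a q z₀ hz₀ hν h1 h2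
end

section
/- Let z₀ > 0. Assume ∫_{(-∞,-1]} y² e^{z₀|y|} ν(dy) < ∞ and ∫_{[1,∞)} y² ν(dy) < ∞, so that J″(z) is finite for every z ∈ [0, z₀]. Then J″ is Lipschitz continuous on the interval [0, z₀] if and only if ∫_{(-∞,-1]} |y|³ e^{z₀|y|} ν(dy) < ∞ and ∫_{[1,∞)} y³ ν(dy) < ∞. -/
open MeasureTheory

/-- The second derivative of the Laplace exponent:
`J″(z) = q + ∫ y² e^{−zy} ν(dy)`. -/
noncomputable def Jsecond (ν : Measure ℝ) (q : ℝ) (z : ℝ) : ℝ :=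
  q + ∫ y, y ^ 2 * Real.exp (-(z * y)) ∂ν

/-!
With `F z y = y² e^{-zy}` we have `∂_z F z y = -y³ e^{-zy}`, and for `z ∈ [0, z₀]` this is
bounded by `G y = |y|³ e^{z₀ max(-y, 0)}`; since `G` is `O(y²)` near `0`, the two tail conditions
say exactly that `G` is `ν`-integrable. If it is, `|F a y - F b y| ≤ |a - b| G y` makes `J″`
Lipschitz with constant `∫ G dν`.

Conversely, `z ↦ F z y` is increasing for `y ≤ 0` and decreasing for `y ≥ 0`. The difference
quotients of `F · y` at `z₀` are therefore nonnegative for `y ≤ 0`, tend to `G y` there, and have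
integrals bounded by the Lipschitz constant; for `y > 0` they are dominated by
`(2 / z₀) (F 0 y + F z₀ y)` once the second point lies in `[z₀/2, z₀]`. Fatou's lemma gives
integrability of `G` on `y ≤ 0`, and the quotients at `0` treat `y > 0` in the same way.
-/

open Filter Set Topology

noncomputable def jIntegrand (z y : ℝ) : ℝ := y ^ 2 * Real.exp (-(z * y))

/-- `sup_{z ∈ [0, z₀]} |∂_z jIntegrand z y|`. -/
noncomputable def jDerivBound (z₀ y : ℝ) : ℝ := |y| ^ 3 * Real.exp (z₀ * max (-y) 0)

lemma continuous_jIntegrand (z : ℝ) : Continuous (jIntegrand z) := by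
  unfold jIntegrand; fun_prop

lemma continuous_jDerivBound (z₀ : ℝ) : Continuous (jDerivBound z₀) := by
  unfold jDerivBound; fun_prop

lemma abs_exp_sub_exp_le_of_le {u v c : ℝ} (hu : u ≤ c) (hv : v ≤ c) :
    |Real.exp u - Real.exp v| ≤ |u - v| * Real.exp c := by
  wlog hvu : v ≤ u generalizing u v
  · rw [abs_sub_comm, abs_sub_comm u]
    exact this hv hu (le_of_not_ge hvu)
  have hv_ge : Real.exp u * (v - u + 1) ≤ Real.exp v := by
    calc Real.exp u * (v - u + 1) ≤ Real.exp u * Real.exp (v - u) := by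
          gcongr; exact Real.add_one_le_exp _
      _ = Real.exp v := by rw [← Real.exp_add, add_sub_cancel]
  rw [abs_of_nonneg (sub_nonneg.2 (Real.exp_le_exp.2 hvu)), abs_of_nonneg (sub_nonneg.2 hvu)]
  nlinarith [Real.exp_le_exp.2 hu]

lemma abs_jIntegrand_sub_le {a b y c : ℝ} (ha : -(a * y) ≤ c) (hb : -(b * y) ≤ c) :
    |jIntegrand a y - jIntegrand b y| ≤ |a - b| * (|y| ^ 3 * Real.exp c) := by
  have h := abs_exp_sub_exp_le_of_le ha hb
  rw [show -(a * y) - -(b * y) = (a - b) * -y by ring, abs_mul, abs_neg] at h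
  unfold jIntegrand
  rw [← mul_sub, abs_mul, abs_of_nonneg (sq_nonneg y)]
  calc y ^ 2 * |Real.exp (-(a * y)) - Real.exp (-(b * y))|
      ≤ y ^ 2 * (|a - b| * |y| * Real.exp c) := by gcongr
    _ = |a - b| * (|y| ^ 3 * Real.exp c) := by rw [← sq_abs y]; ring

lemma hasDerivAt_jIntegrand (z y : ℝ) :
    HasDerivAt (fun z => jIntegrand z y) (-(y ^ 3 * Real.exp (-(z * y)))) z :=
  (((hasDerivAt_mul_const y).fun_neg.exp).const_mul (y ^ 2)).congr_deriv (by ring)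

lemma monotone_jIntegrand_of_nonpos {y : ℝ} (hy : y ≤ 0) : Monotone fun z => jIntegrand z y :=
  fun a b hab => by dsimp only [jIntegrand]; gcongr ?_ * Real.exp ?_; nlinarith

lemma antitone_jIntegrand_of_nonneg {y : ℝ} (hy : 0 ≤ y) : Antitone fun z => jIntegrand z y :=
  fun a b hab => by dsimp only [jIntegrand]; gcongr ?_ * Real.exp ?_; nlinarith

lemma neg_mul_le_mul_max_neg_zero {a z₀ y : ℝ} (ha : a ∈ Icc 0 z₀) :
    -(a * y) ≤ z₀ * max (-y) 0 := by
  obtain ⟨ha0, haz⟩ := ha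
  rcases le_total 0 y with hy | hy
  · nlinarith [le_max_right (-y) 0]
  · rw [max_eq_left (by linarith)]; nlinarith

lemma abs_jIntegrand_sub_le_jDerivBound {z₀ a b : ℝ} (ha : a ∈ Icc 0 z₀) (hb : b ∈ Icc 0 z₀)
    (y : ℝ) : |jIntegrand a y - jIntegrand b y| ≤ |a - b| * jDerivBound z₀ y :=
  abs_jIntegrand_sub_le (neg_mul_le_mul_max_neg_zero ha) (neg_mul_le_mul_max_neg_zero hb)

lemma abs_mul_exp_neg_half_le {z₀ : ℝ} (hz₀ : 0 < z₀) (y : ℝ) :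
    |y| * Real.exp (-(z₀ / 2 * y)) ≤ 2 / z₀ * (1 + Real.exp (-(z₀ * y))) := by
  have habs : |y| ≤ 2 / z₀ * Real.exp (z₀ / 2 * |y|) := by
    rw [div_mul_eq_mul_div, le_div_iff₀ hz₀]
    nlinarith [Real.add_one_le_exp (z₀ / 2 * |y|)]
  have hexp : Real.exp (z₀ / 2 * |y|) * Real.exp (-(z₀ / 2 * y)) ≤ 1 + Real.exp (-(z₀ * y)) := by
    rw [← Real.exp_add]
    rcases le_total 0 y with hy | hy
    · rw [abs_of_nonneg hy, add_neg_cancel, Real.exp_zero]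
      linarith [Real.exp_pos (-(z₀ * y))]
    · rw [abs_of_nonpos hy, show z₀ / 2 * -y + -(z₀ / 2 * y) = -(z₀ * y) by ring]
      linarith
  calc |y| * Real.exp (-(z₀ / 2 * y))
      ≤ 2 / z₀ * Real.exp (z₀ / 2 * |y|) * Real.exp (-(z₀ / 2 * y)) := by gcongr
    _ ≤ 2 / z₀ * (1 + Real.exp (-(z₀ * y))) := by
      rw [mul_assoc]; gcongr

lemma abs_slope_jIntegrand_le {z₀ a b y : ℝ} (hz₀ : 0 < z₀) (ha : 0 ≤ (a - z₀ / 2) * y)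
    (hb : 0 ≤ (b - z₀ / 2) * y) :
    |slope (fun z => jIntegrand z y) a b| ≤ 2 / z₀ * (jIntegrand 0 y + jIntegrand z₀ y) := by
  have hbound : |y| ^ 3 * Real.exp (-(z₀ / 2 * y)) ≤
      2 / z₀ * (jIntegrand 0 y + jIntegrand z₀ y) := by
    calc |y| ^ 3 * Real.exp (-(z₀ / 2 * y))
        = y ^ 2 * (|y| * Real.exp (-(z₀ / 2 * y))) := by rw [← sq_abs y]; ring
      _ ≤ y ^ 2 * (2 / z₀ * (1 + Real.exp (-(z₀ * y)))) :=
        mul_le_mul_of_nonneg_left (abs_mul_exp_neg_half_le hz₀ y) (sq_nonneg y)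
      _ = 2 / z₀ * (jIntegrand 0 y + jIntegrand z₀ y) := by
        simp only [jIntegrand, zero_mul, neg_zero, Real.exp_zero]; ring
  rcases eq_or_ne a b with rfl | hab
  · rw [slope_same, abs_zero]
    exact (by positivity : (0 : ℝ) ≤ |y| ^ 3 * Real.exp (-(z₀ / 2 * y))).trans hbound
  have hdiff := abs_jIntegrand_sub_le (c := -(z₀ / 2 * y)) (y := y) (a := b) (b := a)
    (by nlinarith) (by nlinarith)
  rw [slope_def_field, abs_div, div_le_iff₀ (abs_pos.2 (sub_ne_zero.2 hab.symm))]
  linarith [mul_le_mul_of_nonneg_left hbound (abs_nonneg (b - a))]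

section Integral

variable {α : Type*} [MeasurableSpace α] {ν : Measure α}

lemma integrable_slope {f : ℝ → α → ℝ} {a b : ℝ} (ha : Integrable (f a) ν)
    (hb : Integrable (f b) ν) : Integrable (fun y => slope (fun z => f z y) a b) ν := by
  simp only [slope_def_field]
  exact (hb.sub ha).div_const _

lemma integral_slope {f : ℝ → α → ℝ} {a b : ℝ} (ha : Integrable (f a) ν)
    (hb : Integrable (f b) ν) :
    ∫ y, slope (fun z => f z y) a b ∂ν = slope (fun z => ∫ y, f z y ∂ν) a b := by
  simp only [slope_def_field]
  rw [integral_div, integral_sub hb ha]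

end Integral

lemma abs_slope_le_of_lipschitzOnWith {f : ℝ → ℝ} {s : Set ℝ} {K : NNReal}
    (hf : LipschitzOnWith K f s) {a b : ℝ} (ha : a ∈ s) (hb : b ∈ s) : |slope f a b| ≤ K := by
  rcases eq_or_ne a b with rfl | hab
  · simp
  have h := (lipschitzOnWith_iff_dist_le_mul.1 hf) b hb a ha
  rw [Real.dist_eq, Real.dist_eq] at h
  rw [slope_def_field, abs_div, div_le_iff₀ (abs_pos.2 (sub_ne_zero.2 hab.symm))]
  exact h

lemma integrableOn_of_tendsto_of_integral_le {ν : Measure ℝ} {s : Set ℝ} (hs : MeasurableSet s)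
    {φ : ℕ → ℝ → ℝ} {g D : ℝ → ℝ} {K : ℝ} (hφ : ∀ n, Integrable (φ n) ν)
    (hφK : ∀ n, ∫ y, φ n y ∂ν ≤ K) (hφs : ∀ n, ∀ y ∈ s, 0 ≤ φ n y) (hD : Integrable D ν)
    (hφD : ∀ n, ∀ y ∉ s, |φ n y| ≤ D y)
    (hlim : ∀ y ∈ s, Tendsto (fun n => φ n y) atTop (𝓝 (g y))) :
    IntegrableOn g s ν := by
  have hbound : ∀ n, ∫ y in s, φ n y ∂ν ≤ K + ∫ y in sᶜ, D y ∂ν := fun n => by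
    have hcompl : -∫ y in sᶜ, φ n y ∂ν ≤ ∫ y in sᶜ, D y ∂ν := by
      rw [← integral_neg]
      exact setIntegral_mono_on (hφ n).neg.integrableOn hD.integrableOn hs.compl
        fun y hy => (neg_le_abs _).trans (hφD n y hy)
    linarith [integral_add_compl hs (hφ n), hφK n]
  refine integrable_of_tendsto ((ae_restrict_iff' hs).2 (ae_of_all _ hlim))
    (fun n => (hφ n).aestronglyMeasurable.restrict) (ne_top_of_le_ne_top
      (b := ENNReal.ofReal (K + ∫ y in sᶜ, D y ∂ν)) ENNReal.ofReal_ne_top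
      (liminf_le_of_frequently_le' (Frequently.of_forall fun n => ?_)))
  rw [← ofReal_integral_norm_eq_lintegral_enorm (hφ n).integrableOn]
  refine ENNReal.ofReal_le_ofReal (le_of_eq_of_le ?_ (hbound n))
  exact setIntegral_congr_fun hs fun y hy => Real.norm_of_nonneg (hφs n y hy)

section LevyMeasure

variable {ν : Measure ℝ}

lemma integrable_min_sq_one_of_lintegral_lt_top
    (hν : ∫⁻ y, ENNReal.ofReal (min (y ^ 2) 1) ∂ν < ⊤) :
    Integrable (fun y => min (y ^ 2) 1) ν := by
  refine ⟨(continuous_pow 2 |>.min continuous_const).aestronglyMeasurable, ?_⟩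
  rwa [hasFiniteIntegral_iff_ofReal (ae_of_all _ fun y => le_min (sq_nonneg y) zero_le_one)]

lemma integrable_of_abs_le_mul_min_sq_one (hmin : Integrable (fun y => min (y ^ 2) 1) ν)
    {f : ℝ → ℝ} {C : ℝ} (hf : Continuous f) (hC : ∀ y ∈ Ioo (-1) 1, |f y| ≤ C * min (y ^ 2) 1)
    (hl : IntegrableOn f (Iic (-1)) ν) (hr : IntegrableOn f (Ici 1) ν) : Integrable f ν := by
  have hmid : IntegrableOn f (Ioo (-1) 1) ν :=
    (hmin.const_mul C).integrableOn.mono' hf.aestronglyMeasurable.restrict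
      ((ae_restrict_iff' measurableSet_Ioo).2 (ae_of_all _ hC))
  have hcover : Iic (-1 : ℝ) ∪ Ioo (-1) 1 ∪ Ici 1 = univ := by
    ext y
    simp only [mem_union, mem_Iic, mem_Ioo, mem_Ici, mem_univ, iff_true]
    by_contra! h
    linarith [h.2, h.1.2 h.1.1]
  rw [← integrableOn_univ, ← hcover]
  exact (hl.union hmid).union hr

lemma integrable_jIntegrand_zero_of_integrableOn (hmin : Integrable (fun y => min (y ^ 2) 1) ν)
    {z₀ : ℝ} (h1 : IntegrableOn (fun y => y ^ 2 * Real.exp (z₀ * |y|)) (Iic (-1)) ν)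
    (h2 : IntegrableOn (fun y => y ^ 2) (Ici 1) ν) (hz₀ : 0 ≤ z₀) :
    Integrable (jIntegrand 0) ν := by
  have hF : jIntegrand 0 = fun y => y ^ 2 := by
    ext y; simp [jIntegrand]
  rw [hF]
  refine integrable_of_abs_le_mul_min_sq_one hmin (C := 1) (continuous_pow 2) (fun y hy => ?_)
    (h1.mono' (continuous_pow 2).aestronglyMeasurable.restrict (ae_of_all _ fun y => ?_)) h2
  · rw [one_mul, abs_of_nonneg (sq_nonneg y), min_eq_left]
    nlinarith [hy.1, hy.2]
  · rw [Real.norm_eq_abs, abs_of_nonneg (sq_nonneg y)]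
    exact le_mul_of_one_le_right (sq_nonneg y) (Real.one_le_exp (by positivity))

lemma integrable_jIntegrand_of_integrableOn (hmin : Integrable (fun y => min (y ^ 2) 1) ν)
    {z₀ : ℝ} (h1 : IntegrableOn (fun y => y ^ 2 * Real.exp (z₀ * |y|)) (Iic (-1)) ν)
    (h2 : IntegrableOn (fun y => y ^ 2) (Ici 1) ν) (hz₀ : 0 ≤ z₀) :
    Integrable (jIntegrand z₀) ν := by
  refine integrable_of_abs_le_mul_min_sq_one hmin (C := Real.exp z₀) (continuous_jIntegrand z₀)
    (fun y hy => ?_) (h1.congr_fun (fun y hy => ?_) measurableSet_Iic)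
    (h2.mono' (continuous_jIntegrand z₀).aestronglyMeasurable.restrict
      ((ae_restrict_iff' measurableSet_Ici).2 (ae_of_all _ fun y hy => ?_)))
  · have hy2 : y ^ 2 ≤ 1 := by nlinarith [hy.1, hy.2]
    rw [jIntegrand, min_eq_left hy2, abs_of_nonneg (by positivity), mul_comm (Real.exp z₀)]
    gcongr
    nlinarith [hy.1, hy.2]
  · dsimp only
    rw [jIntegrand, abs_of_nonpos (by linarith [mem_Iic.1 hy] : y ≤ 0)]
    ring_nf
  · rw [Real.norm_eq_abs, jIntegrand, abs_of_nonneg (by positivity)]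
    exact mul_le_of_le_one_right (sq_nonneg y)
      (Real.exp_le_one_iff.2 (by nlinarith [mem_Ici.1 hy]))

lemma integrable_jIntegrand_of_mem_Icc {z₀ z : ℝ} (h0 : Integrable (jIntegrand 0) ν)
    (hz₀ : Integrable (jIntegrand z₀) ν) (hz : z ∈ Icc 0 z₀) : Integrable (jIntegrand z) ν := by
  refine (h0.add hz₀).mono' (continuous_jIntegrand z).aestronglyMeasurable
    (ae_of_all _ fun y => ?_)
  have hF : ∀ w, 0 ≤ jIntegrand w y := fun w => by unfold jIntegrand; positivity
  rw [Real.norm_eq_abs, abs_of_nonneg (hF z), Pi.add_apply]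
  rcases le_total 0 y with hy | hy
  · linarith [antitone_jIntegrand_of_nonneg hy hz.1, hF z₀]
  · linarith [monotone_jIntegrand_of_nonpos hy hz.2, hF 0]

lemma jDerivBound_eqOn_Iic (z₀ : ℝ) :
    EqOn (fun y => |y| ^ 3 * Real.exp (z₀ * |y|)) (jDerivBound z₀) (Iic 0) := fun y hy => by
  dsimp only
  rw [jDerivBound, max_eq_left (neg_nonneg.2 hy), abs_of_nonpos hy]

lemma jDerivBound_eqOn_Ici (z₀ : ℝ) : EqOn (fun y => y ^ 3) (jDerivBound z₀) (Ici 0) :=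
  fun y hy => by
    rw [jDerivBound, max_eq_right (neg_nonpos.2 hy), mul_zero, Real.exp_zero, mul_one,
      abs_of_nonneg hy]

lemma integrable_jDerivBound_iff (hmin : Integrable (fun y => min (y ^ 2) 1) ν) {z₀ : ℝ}
    (hz₀ : 0 ≤ z₀) :
    Integrable (jDerivBound z₀) ν ↔
      IntegrableOn (fun y => |y| ^ 3 * Real.exp (z₀ * |y|)) (Iic (-1)) ν ∧
        IntegrableOn (fun y => y ^ 3) (Ici 1) ν := by
  have hl : EqOn (fun y => |y| ^ 3 * Real.exp (z₀ * |y|)) (jDerivBound z₀) (Iic (-1)) :=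
    (jDerivBound_eqOn_Iic z₀).mono (Iic_subset_Iic.2 (by norm_num))
  have hr : EqOn (fun y => y ^ 3) (jDerivBound z₀) (Ici 1) :=
    (jDerivBound_eqOn_Ici z₀).mono (Ici_subset_Ici.2 zero_le_one)
  refine ⟨fun hG => ⟨hG.integrableOn.congr_fun hl.symm measurableSet_Iic,
    hG.integrableOn.congr_fun hr.symm measurableSet_Ici⟩, fun ⟨hneg, hpos⟩ => ?_⟩
  refine integrable_of_abs_le_mul_min_sq_one hmin (C := Real.exp z₀) (continuous_jDerivBound z₀)
    (fun y hy => ?_) (hneg.congr_fun hl measurableSet_Iic) (hpos.congr_fun hr measurableSet_Ici)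
  have hy1 : |y| ≤ 1 := abs_le.2 ⟨hy.1.le, hy.2.le⟩
  have hy2 : y ^ 2 ≤ 1 := by nlinarith [hy.1, hy.2]
  rw [jDerivBound, min_eq_left hy2, abs_of_nonneg (by positivity), mul_comm (Real.exp z₀),
    ← sq_abs y]
  exact mul_le_mul (pow_le_pow_of_le_one (abs_nonneg y) hy1 (by norm_num))
    (Real.exp_le_exp.2 (mul_le_of_le_one_right hz₀ (max_le (by linarith [hy.1]) zero_le_one)))
    (by positivity) (by positivity)

lemma jsecond_sub {q a b : ℝ} (ha : Integrable (jIntegrand a) ν)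
    (hb : Integrable (jIntegrand b) ν) :
    Jsecond ν q a - Jsecond ν q b = ∫ y, (jIntegrand a y - jIntegrand b y) ∂ν := by
  rw [integral_sub ha hb, Jsecond, Jsecond]
  simp only [jIntegrand]
  ring

lemma slope_jsecond {q a b : ℝ} (ha : Integrable (jIntegrand a) ν)
    (hb : Integrable (jIntegrand b) ν) :
    slope (Jsecond ν q) a b = ∫ y, slope (fun z => jIntegrand z y) a b ∂ν := by
  rw [integral_slope ha hb, slope_def_field, slope_def_field, jsecond_sub hb ha,
    integral_sub hb ha]

lemma lipschitzOnWith_jsecond {q z₀ : ℝ} (hF : ∀ z ∈ Icc 0 z₀, Integrable (jIntegrand z) ν)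
    (hG : Integrable (jDerivBound z₀) ν) :
    LipschitzOnWith (∫ y, jDerivBound z₀ y ∂ν).toNNReal (Jsecond ν q) (Icc 0 z₀) := by
  refine LipschitzOnWith.of_dist_le_mul fun a ha b hb => ?_
  have hG0 : 0 ≤ ∫ y, jDerivBound z₀ y ∂ν :=
    integral_nonneg fun y => by unfold jDerivBound; positivity
  rw [Real.dist_eq, Real.dist_eq, Real.coe_toNNReal _ hG0, jsecond_sub (hF a ha) (hF b hb),
    mul_comm, ← integral_const_mul]
  exact norm_integral_le_of_norm_le (hG.const_mul _)
    (ae_of_all _ fun y => (Real.norm_eq_abs _).trans_le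
      (abs_jIntegrand_sub_le_jDerivBound ha hb y))

section Forward

variable {z₀ K : ℝ}

lemma integrableOn_Iic_jDerivBound (hz₀ : 0 < z₀)
    (hF : ∀ z ∈ Icc 0 z₀, Integrable (jIntegrand z) ν)
    (hK : ∀ a ∈ Icc 0 z₀, ∀ b ∈ Icc 0 z₀, |∫ y, slope (fun z => jIntegrand z y) a b ∂ν| ≤ K) :
    IntegrableOn (jDerivBound z₀) (Iic 0) ν := by
  obtain ⟨u, -, hu_mem, hu⟩ := exists_seq_strictMono_tendsto' (half_lt_self hz₀)
  have hu_Icc : ∀ n, u n ∈ Icc 0 z₀ := fun n =>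
    ⟨by linarith [(hu_mem n).1], (hu_mem n).2.le⟩
  have hz₀_Icc : z₀ ∈ Icc 0 z₀ := right_mem_Icc.2 hz₀.le
  have hu' : Tendsto u atTop (𝓝[≠] z₀) :=
    tendsto_nhdsWithin_iff.2 ⟨hu, Eventually.of_forall fun n => (hu_mem n).2.ne⟩
  refine integrableOn_of_tendsto_of_integral_le measurableSet_Iic
    (φ := fun n y => slope (fun z => jIntegrand z y) z₀ (u n))
    (D := fun y => 2 / z₀ * (jIntegrand 0 y + jIntegrand z₀ y))
    (fun n => integrable_slope (hF _ hz₀_Icc) (hF _ (hu_Icc n)))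
    (fun n => (le_abs_self _).trans (hK _ hz₀_Icc _ (hu_Icc n)))
    (fun n y hy =>
      ((monotone_jIntegrand_of_nonpos hy).monotoneOn univ).slope_nonneg trivial trivial)
    (((hF 0 (left_mem_Icc.2 hz₀.le)).add (hF _ hz₀_Icc)).const_mul _)
    (fun n y hy => abs_slope_jIntegrand_le hz₀ (by nlinarith [notMem_Iic.1 hy])
      (by nlinarith [notMem_Iic.1 hy, (hu_mem n).1]))
    (fun y hy => ?_)
  have hval : jDerivBound z₀ y = -(y ^ 3 * Real.exp (-(z₀ * y))) := by
    rw [← jDerivBound_eqOn_Iic z₀ hy]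
    dsimp only
    rw [abs_of_nonpos hy, mul_neg]
    ring
  rw [hval]
  exact (hasDerivAt_jIntegrand z₀ y).tendsto_slope.comp hu'

lemma integrableOn_Ioi_jDerivBound (hz₀ : 0 < z₀)
    (hF : ∀ z ∈ Icc 0 z₀, Integrable (jIntegrand z) ν)
    (hK : ∀ a ∈ Icc 0 z₀, ∀ b ∈ Icc 0 z₀, |∫ y, slope (fun z => jIntegrand z y) a b ∂ν| ≤ K) :
    IntegrableOn (jDerivBound z₀) (Ioi 0) ν := by
  obtain ⟨u, -, hu_mem, hu⟩ := exists_seq_strictAnti_tendsto' (half_pos hz₀)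
  have hu_Icc : ∀ n, u n ∈ Icc 0 z₀ := fun n =>
    ⟨(hu_mem n).1.le, by linarith [(hu_mem n).2]⟩
  have h0_Icc : 0 ∈ Icc 0 z₀ := left_mem_Icc.2 hz₀.le
  have hu' : Tendsto u atTop (𝓝[≠] 0) :=
    tendsto_nhdsWithin_iff.2 ⟨hu, Eventually.of_forall fun n => (hu_mem n).1.ne'⟩
  refine integrableOn_of_tendsto_of_integral_le measurableSet_Ioi
    (φ := fun n y => -slope (fun z => jIntegrand z y) 0 (u n))
    (D := fun y => 2 / z₀ * (jIntegrand 0 y + jIntegrand z₀ y))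
    (fun n => (integrable_slope (hF _ h0_Icc) (hF _ (hu_Icc n))).neg)
    (fun n => by rw [integral_neg]; exact (neg_le_abs _).trans (hK _ h0_Icc _ (hu_Icc n)))
    (fun n y hy => neg_nonneg.2 (((antitone_jIntegrand_of_nonneg (le_of_lt hy)).antitoneOn
      univ).slope_nonpos trivial trivial))
    (((hF 0 h0_Icc).add (hF _ (right_mem_Icc.2 hz₀.le))).const_mul _)
    (fun n y hy => by
      rw [abs_neg]
      exact abs_slope_jIntegrand_le hz₀ (by nlinarith [notMem_Ioi.1 hy])
        (by nlinarith [notMem_Ioi.1 hy, (hu_mem n).2]))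
    (fun y hy => ?_)
  have hval : jDerivBound z₀ y = -(-(y ^ 3 * Real.exp (-(0 * y)))) := by
    rw [← jDerivBound_eqOn_Ici z₀ (Ioi_subset_Ici_self hy), zero_mul, neg_zero, Real.exp_zero,
      mul_one, neg_neg]
  rw [hval]
  exact ((hasDerivAt_jIntegrand 0 y).tendsto_slope.comp hu').neg

lemma integrable_jDerivBound_of_abs_integral_slope_le (hz₀ : 0 < z₀)
    (hF : ∀ z ∈ Icc 0 z₀, Integrable (jIntegrand z) ν)
    (hK : ∀ a ∈ Icc 0 z₀, ∀ b ∈ Icc 0 z₀, |∫ y, slope (fun z => jIntegrand z y) a b ∂ν| ≤ K) :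
    Integrable (jDerivBound z₀) ν := by
  rw [← integrableOn_univ, ← Iic_union_Ioi (a := (0 : ℝ))]
  exact (integrableOn_Iic_jDerivBound hz₀ hF hK).union (integrableOn_Ioi_jDerivBound hz₀ hF hK)

end Forward

end LevyMeasure

theorem jsecond_lipschitzOn_iff_general (ν : Measure ℝ) (q z₀ : ℝ) (hz₀ : 0 < z₀)
    (hν : ∫⁻ y, ENNReal.ofReal (min (y ^ 2) 1) ∂ν < ⊤)
    (h1 : IntegrableOn (fun y => y ^ 2 * Real.exp (z₀ * |y|)) (Set.Iic (-1)) ν)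
    (h2 : IntegrableOn (fun y => y ^ 2) (Set.Ici 1) ν) :
    (∃ K : NNReal, LipschitzOnWith K (Jsecond ν q) (Set.Icc 0 z₀)) ↔
      (IntegrableOn (fun y => |y| ^ 3 * Real.exp (z₀ * |y|)) (Set.Iic (-1)) ν ∧
        IntegrableOn (fun y => y ^ 3) (Set.Ici 1) ν) := by
  have hmin := integrable_min_sq_one_of_lintegral_lt_top hν
  have hF : ∀ z ∈ Icc 0 z₀, Integrable (jIntegrand z) ν := fun z =>
    integrable_jIntegrand_of_mem_Icc (integrable_jIntegrand_zero_of_integrableOn hmin h1 h2 hz₀.le)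
      (integrable_jIntegrand_of_integrableOn hmin h1 h2 hz₀.le)
  rw [← integrable_jDerivBound_iff hmin hz₀.le]
  refine ⟨fun ⟨K, hK⟩ => integrable_jDerivBound_of_abs_integral_slope_le (K := K) hz₀ hF
    fun a ha b hb => ?_, fun hG => ⟨_, lipschitzOnWith_jsecond hF hG⟩⟩
  rw [← slope_jsecond (q := q) (hF a ha) (hF b hb)]
  exact abs_slope_le_of_lipschitzOnWith hK ha hb

/-- `J″` is Lipschitz on `[0, z₀]` iff
`∫_{(-∞,-1]} |y|³ e^{z₀|y|} ν(dy) < ∞` and `∫_{[1,∞)} y³ ν(dy) < ∞`. -/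
theorem jsecond_lipschitzOn_iff (ν : Measure ℝ) (q z₀ : ℝ) (hq : 0 ≤ q) (hz₀ : 0 < z₀)
    (hν : ∫⁻ y, ENNReal.ofReal (min (y ^ 2) 1) ∂ν < ⊤)
    (h1 : IntegrableOn (fun y => y ^ 2 * Real.exp (z₀ * |y|)) (Set.Iic (-1)) ν)
    (h2 : IntegrableOn (fun y => y ^ 2) (Set.Ici 1) ν) :
    (∃ K : NNReal, LipschitzOnWith K (Jsecond ν q) (Set.Icc 0 z₀)) ↔
      (IntegrableOn (fun y => |y| ^ 3 * Real.exp (z₀ * |y|)) (Set.Iic (-1)) ν ∧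
        IntegrableOn (fun y => y ^ 3) (Set.Ici 1) ν) :=
  jsecond_lipschitzOn_iff_general ν q z₀ hz₀ hν h1 h2
end

section
/- The function J″ is well defined (i.e. the defining integral converges) and bounded on [0, +∞) if and only if the support of ν is contained in [0, +∞) and ∫_{[1,∞)} y² ν(dy) < ∞. -/
/-!
If `ν` charges a neighbourhood `U` of a point `x < 0`, then `U` stays away from `0`, so `ν U` is
finite and positive by the Lévy integrability condition, and `∫_U y² e^{-zy} ν(dy)` grows like
`e^{z|x|/2}`; hence boundedness forces `ν` to live on `[0, ∞)`, and `z = 0` gives the tail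
condition. Conversely, on `[0, ∞)` we have `y² e^{-zy} ≤ y²`, and `y²` is `ν`-integrable: near `0`
by the Lévy condition, on `[1, ∞)` by assumption.
-/

open MeasureTheory

/-- The topological support of a measure on `ℝ`: the set of points all of whose
open neighborhoods have positive measure. -/
def measureSupport (ν : Measure ℝ) : Set ℝ :=
  {x : ℝ | ∀ U : Set ℝ, IsOpen U → x ∈ U → ν U ≠ 0}

open Set Filter Topology

lemma measureSupport_eq_support (ν : Measure ℝ) : measureSupport ν = ν.support := by
  ext x
  simp [measureSupport, Measure.support_eq_forall_isOpen, pos_iff_ne_zero, imp.swap]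

variable {ν : Measure ℝ}

lemma ae_mem_of_measureSupport_subset {s : Set ℝ} (h : measureSupport ν ⊆ s) :
    ∀ᵐ y ∂ν, y ∈ s :=
  mem_of_superset Measure.support_mem_ae (measureSupport_eq_support ν ▸ h)

lemma measure_lt_top_of_forall_le_sq (hν : ∫⁻ y, ENNReal.ofReal (min (y ^ 2) 1) ∂ν < ⊤)
    {s : Set ℝ} {ε : ℝ} (hε : 0 < ε) (hs : ∀ y ∈ s, ε ≤ y ^ 2) : ν s < ⊤ := by
  have hle : ENNReal.ofReal (min ε 1) * ν s ≤ ∫⁻ y, ENNReal.ofReal (min (y ^ 2) 1) ∂ν := by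
    rw [← setLIntegral_const]
    refine (setLIntegral_mono (by fun_prop) fun y hy => ?_).trans (setLIntegral_le_lintegral _ _)
    exact ENNReal.ofReal_le_ofReal (min_le_min_right 1 (hs y hy))
  have hpos : ENNReal.ofReal (min ε 1) ≠ 0 := (ENNReal.ofReal_pos.2 (lt_min hε one_pos)).ne'
  exact ENNReal.lt_top_of_mul_ne_top_right (hle.trans_lt hν).ne hpos

lemma integrableOn_sq_Icc (hν : ∫⁻ y, ENNReal.ofReal (min (y ^ 2) 1) ∂ν < ⊤) :
    IntegrableOn (fun y : ℝ => y ^ 2) (Icc (-1) 1) ν := by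
  refine ⟨(continuous_pow 2).aestronglyMeasurable, ?_⟩
  rw [hasFiniteIntegral_iff_ofReal (ae_of_all _ fun y => sq_nonneg y)]
  refine lt_of_le_of_lt ?_ hν
  refine (setLIntegral_mono (by fun_prop) fun y hy => ?_).trans (setLIntegral_le_lintegral _ _)
  refine ENNReal.ofReal_le_ofReal (le_min le_rfl ?_)
  nlinarith [hy.1, hy.2]

lemma integrable_sq_of_ae_nonneg (hν : ∫⁻ y, ENNReal.ofReal (min (y ^ 2) 1) ∂ν < ⊤)
    (hae : ∀ᵐ y ∂ν, 0 ≤ y) (hI : IntegrableOn (fun y : ℝ => y ^ 2) (Ici 1) ν) :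
    Integrable (fun y : ℝ => y ^ 2) ν := by
  have hIci : IntegrableOn (fun y : ℝ => y ^ 2) (Ici 0) ν :=
    ((integrableOn_sq_Icc hν).union hI).mono_set fun y hy => by
      rcases le_total y 1 with h | h
      exacts [Or.inl ⟨by linarith [mem_Ici.1 hy], h⟩, Or.inr h]
  rwa [IntegrableOn, Measure.restrict_eq_self_of_ae_mem (s := Ici 0) hae] at hIci

lemma sq_mul_exp_neg_mul_le_sq {z y : ℝ} (hz : 0 ≤ z) (hy : 0 ≤ y) :
    y ^ 2 * Real.exp (-(z * y)) ≤ y ^ 2 :=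
  mul_le_of_le_one_right (sq_nonneg y) (Real.exp_le_one_iff.2 (by nlinarith))

lemma integrable_sq_mul_exp_of_ae_nonneg (h2 : Integrable (fun y : ℝ => y ^ 2) ν)
    (hae : ∀ᵐ y ∂ν, 0 ≤ y) {z : ℝ} (hz : 0 ≤ z) :
    Integrable (fun y => y ^ 2 * Real.exp (-(z * y))) ν := by
  refine h2.mono' (by fun_prop) ?_
  filter_upwards [hae] with y hy
  rw [Real.norm_of_nonneg (by positivity)]
  exact sq_mul_exp_neg_mul_le_sq hz hy

lemma integral_sq_mul_exp_le_of_ae_nonneg (h2 : Integrable (fun y : ℝ => y ^ 2) ν)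
    (hae : ∀ᵐ y ∂ν, 0 ≤ y) {z : ℝ} (hz : 0 ≤ z) :
    ∫ y, y ^ 2 * Real.exp (-(z * y)) ∂ν ≤ ∫ y, y ^ 2 ∂ν := by
  refine integral_mono_ae (integrable_sq_mul_exp_of_ae_nonneg h2 hae hz) h2 ?_
  filter_upwards [hae] with y hy
  exact sq_mul_exp_neg_mul_le_sq hz hy

lemma exists_lt_integral_sq_mul_exp_of_neg_mem_support
    (hν : ∫⁻ y, ENNReal.ofReal (min (y ^ 2) 1) ∂ν < ⊤) {x : ℝ} (hx : x ∈ ν.support) (hx0 : x < 0)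
    (hint : ∀ z : ℝ, 0 ≤ z → Integrable (fun y => y ^ 2 * Real.exp (-(z * y))) ν) (C : ℝ) :
    ∃ z, 0 ≤ z ∧ C < ∫ y, y ^ 2 * Real.exp (-(z * y)) ∂ν := by
  set U := Ioo (2 * x) (x / 2)
  have hsq : ∀ y ∈ U, x ^ 2 / 4 ≤ y ^ 2 := fun y hy => by nlinarith [hy.1, hy.2]
  have hx2 : 0 < x ^ 2 / 4 := by nlinarith
  have hνU : 0 < (ν U).toReal := ENNReal.toReal_pos
    ((Measure.mem_support_iff_forall x).1 hx U (Ioo_mem_nhds (by linarith) (by linarith))).ne'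
    (measure_lt_top_of_forall_le_sq hν hx2 hsq).ne
  -- On `U`, the weight `e^{-zy}` is at least `e^{z |x| / 2}`, which blows up as `z → ∞`.
  have hlower : ∀ z, 0 ≤ z →
      x ^ 2 / 4 * Real.exp (z * (-x / 2)) * (ν U).toReal ≤ ∫ y, y ^ 2 * Real.exp (-(z * y)) ∂ν := by
    intro z hz
    refine (setIntegral_ge_of_const_le_real measurableSet_Ioo
      (measure_lt_top_of_forall_le_sq hν hx2 hsq).ne (fun y hy => ?_)
      (hint z hz).integrableOn).trans
      (setIntegral_le_integral (hint z hz) (ae_of_all _ fun y => by positivity))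
    refine mul_le_mul (hsq y hy) (Real.exp_le_exp.2 ?_) (by positivity) (sq_nonneg y)
    nlinarith [hy.2]
  have htends : Tendsto (fun z => x ^ 2 / 4 * Real.exp (z * (-x / 2)) * (ν U).toReal) atTop atTop :=
    ((Real.tendsto_exp_atTop.comp (tendsto_id.atTop_mul_const (by linarith))).const_mul_atTop
      hx2).atTop_mul_const hνU
  obtain ⟨z, hz, hCz⟩ := ((eventually_ge_atTop 0).and (htends.eventually_gt_atTop C)).exists
  exact ⟨z, hz, hCz.trans_le (hlower z hz)⟩

theorem jsecond_bounded_iff_general (ν : Measure ℝ) (q : ℝ)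
    (hν : ∫⁻ y, ENNReal.ofReal (min (y ^ 2) 1) ∂ν < ⊤) :
    ((∀ z : ℝ, 0 ≤ z → Integrable (fun y => y ^ 2 * Real.exp (-(z * y))) ν) ∧
      ∃ C : ℝ, ∀ z : ℝ, 0 ≤ z → |Jsecond ν q z| ≤ C) ↔
    (measureSupport ν ⊆ Set.Ici 0 ∧ IntegrableOn (fun y => y ^ 2) (Set.Ici 1) ν) := by
  constructor
  · rintro ⟨hint, C, hC⟩
    refine ⟨fun x hx => mem_Ici.2 <| not_lt.1 fun hx0 => ?_,
      by simpa using (hint 0 le_rfl).integrableOn⟩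
    obtain ⟨z, hz, hCz⟩ := exists_lt_integral_sq_mul_exp_of_neg_mem_support hν
      (measureSupport_eq_support ν ▸ hx) hx0 hint (C - q)
    have := (le_abs_self _).trans (hC z hz)
    rw [Jsecond] at this
    linarith
  · rintro ⟨hsupp, hI⟩
    have hae : ∀ᵐ y ∂ν, 0 ≤ y := ae_mem_of_measureSupport_subset hsupp
    have h2 := integrable_sq_of_ae_nonneg hν hae hI
    refine ⟨fun z hz => integrable_sq_mul_exp_of_ae_nonneg h2 hae hz, |q| + ∫ y, y ^ 2 ∂ν,
      fun z hz => ?_⟩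
    have hnonneg : 0 ≤ ∫ y, y ^ 2 * Real.exp (-(z * y)) ∂ν := integral_nonneg fun y => by positivity
    calc |Jsecond ν q z| ≤ |q| + |∫ y, y ^ 2 * Real.exp (-(z * y)) ∂ν| := abs_add_le _ _
      _ ≤ |q| + ∫ y, y ^ 2 ∂ν := by
        rw [abs_of_nonneg hnonneg]
        exact (add_le_add_iff_left _).2 (integral_sq_mul_exp_le_of_ae_nonneg h2 hae hz)

/-- `J″` is well defined and bounded on `[0,∞)` iff `supp ν ⊆ [0,∞)` and
`∫_{[1,∞)} y² ν(dy) < ∞`. -/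
theorem jsecond_bounded_iff (ν : Measure ℝ) (q : ℝ) (hq : 0 ≤ q)
    (hν : ∫⁻ y, ENNReal.ofReal (min (y ^ 2) 1) ∂ν < ⊤) :
    ((∀ z : ℝ, 0 ≤ z → Integrable (fun y => y ^ 2 * Real.exp (-(z * y))) ν) ∧
      ∃ C : ℝ, ∀ z : ℝ, 0 ≤ z → |Jsecond ν q z| ≤ C) ↔
    (measureSupport ν ⊆ Set.Ici 0 ∧ IntegrableOn (fun y => y ^ 2) (Set.Ici 1) ν) :=
  jsecond_bounded_iff_general ν q hν
end

section
/- Assume q = 0, the support of ν is contained in [0, +∞), and ∫_{[1,∞)} y ν(dy) < ∞. Assume further there exist ρ > 1 and a function M varying slowly at 0 such that ∫_{(0,x]} y² ν(dy) / (x^ρ M(x)) → 1 as x → 0⁺. Then for every constant c > 0 one has limsup_{z→∞} ( ln z − c · J′(z) ) = +∞. -/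
/-!
With `q = 0` and `ν` carried by `[0, ∞)`, the integrand of `J′(z)` is at most `y 𝟙_{(0,1]}(y)`,
so `J′` is bounded above once `∫_{(0,1]} y ν(dy) < ∞`, and then `ln z − c J′(z) → ∞`.
That first moment is finite because `ρ > 1`: on a dyadic shell `(t/2, t]` we have `y ≤ 2y²/t`,
so the shell contributes at most `(2/t) ∫_{(0,t]} y² ν(dy) ≲ t^{ρ-1} M(t)`, and slow variation
makes `t^{ρ-1} M(t)` shrink by a fixed factor `r < 1` each time `t` is halved; the shells
therefore contribute a convergent geometric series.
-/

open MeasureTheory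

open Filter Set Topology
open scoped ENNReal

lemma ae_nonneg_of_measureSupport_subset_Ici {ν : Measure ℝ}
    (hsupp : measureSupport ν ⊆ Ici 0) : ∀ᵐ y ∂ν, 0 ≤ y := by
  suffices ν (Iio 0) = 0 by simpa [ae_iff, Iio] using this
  refine measure_null_of_locally_null _ fun x hx => ?_
  have hx' : x ∉ measureSupport ν := fun h => (hsupp h).not_gt (mem_Iio.1 hx)
  simp only [measureSupport, mem_ofPred_eq, not_forall, not_not] at hx'
  obtain ⟨U, hU, hxU, hνU⟩ := hx'
  exact ⟨U, nhdsWithin_le_nhds (hU.mem_nhds hxU), hνU⟩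

lemma Ioc_zero_subset_iUnion_Ioc_div_two_pow (b : ℝ) :
    Ioc 0 b ⊆ ⋃ n : ℕ, Ioc (b / 2 ^ (n + 1)) (b / 2 ^ n) := by
  intro y ⟨hy0, hyb⟩
  obtain ⟨n, hn, hn'⟩ := exists_nat_pow_near ((one_le_div hy0).2 hyb) one_lt_two
  refine mem_iUnion.2 ⟨n, ?_, ?_⟩
  · rwa [div_lt_iff₀ (by positivity), mul_comm, ← div_lt_iff₀ hy0]
  · rwa [le_div_iff₀ (by positivity), mul_comm, ← le_div_iff₀ hy0]

lemma lintegral_Ioc_zero_lt_top_of_le_geometric {μ : Measure ℝ} {f : ℝ → ℝ≥0∞} {b : ℝ}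
    {C r : ℝ≥0∞} (hC : C ≠ ∞) (hr : r < 1)
    (h : ∀ n : ℕ, ∫⁻ y in Ioc (b / 2 ^ (n + 1)) (b / 2 ^ n), f y ∂μ ≤ C * r ^ n) :
    ∫⁻ y in Ioc 0 b, f y ∂μ < ∞ :=
  calc ∫⁻ y in Ioc 0 b, f y ∂μ
      ≤ ∫⁻ y in ⋃ n : ℕ, Ioc (b / 2 ^ (n + 1)) (b / 2 ^ n), f y ∂μ :=
        lintegral_mono_set (Ioc_zero_subset_iUnion_Ioc_div_two_pow b)
    _ ≤ ∑' n : ℕ, ∫⁻ y in Ioc (b / 2 ^ (n + 1)) (b / 2 ^ n), f y ∂μ := lintegral_iUnion_le _ _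
    _ ≤ ∑' n : ℕ, C * r ^ n := ENNReal.tsum_le_tsum h
    _ = C * (1 - r)⁻¹ := by rw [ENNReal.tsum_mul_left, ENNReal.tsum_geometric]
    _ < ∞ := ENNReal.mul_lt_top hC.lt_top (by simpa using hr)

lemma le_mul_pow_of_comp_half_le {g : ℝ → ℝ} {b r : ℝ} (hb : 0 < b) (hr : 0 ≤ r)
    (h : ∀ t ∈ Ioc 0 b, g (t / 2) ≤ r * g t) (n : ℕ) : g (b / 2 ^ n) ≤ g b * r ^ n := by
  induction n with
  | zero => simp
  | succ n ih =>
    have hn : b / 2 ^ n ∈ Ioc 0 b :=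
      ⟨by positivity, div_le_self hb.le (one_le_pow₀ one_le_two)⟩
    calc g (b / 2 ^ (n + 1)) = g (b / 2 ^ n / 2) := by rw [pow_succ, div_div]
      _ ≤ r * g (b / 2 ^ n) := h _ hn
      _ ≤ r * (g b * r ^ n) := mul_le_mul_of_nonneg_left ih hr
      _ = g b * r ^ (n + 1) := by ring

lemma lintegral_Ioc_half_ofReal_le (μ : Measure ℝ) {t : ℝ} (ht : 0 < t) :
    ∫⁻ y in Ioc (t / 2) t, ENNReal.ofReal y ∂μ
      ≤ ENNReal.ofReal (2 / t) * ∫⁻ y in Ioc 0 t, ENNReal.ofReal (y ^ 2) ∂μ :=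
  calc ∫⁻ y in Ioc (t / 2) t, ENNReal.ofReal y ∂μ
      ≤ ∫⁻ y in Ioc (t / 2) t, ENNReal.ofReal (2 / t) * ENNReal.ofReal (y ^ 2) ∂μ := by
        refine setLIntegral_mono (by fun_prop) fun y ⟨hy, hyt⟩ => ?_
        rw [← ENNReal.ofReal_mul (by positivity)]
        refine ENNReal.ofReal_le_ofReal ?_
        rw [div_mul_eq_mul_div, le_div_iff₀ ht]
        nlinarith
    _ = ENNReal.ofReal (2 / t) * ∫⁻ y in Ioc (t / 2) t, ENNReal.ofReal (y ^ 2) ∂μ :=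
        lintegral_const_mul' _ _ ENNReal.ofReal_ne_top
    _ ≤ ENNReal.ofReal (2 / t) * ∫⁻ y in Ioc 0 t, ENNReal.ofReal (y ^ 2) ∂μ := by
        gcongr
        positivity

lemma integrableOn_Ioc_zero_of_lintegral_sq_le {μ : Measure ℝ} {g : ℝ → ℝ} {b r : ℝ}
    (hb : 0 < b) (hr₀ : 0 ≤ r) (hr₁ : r < 1)
    (hsq : ∀ t ∈ Ioc 0 b, ∫⁻ y in Ioc 0 t, ENNReal.ofReal (y ^ 2) ∂μ ≤ ENNReal.ofReal (t * g t))
    (hg : ∀ t ∈ Ioc 0 b, g (t / 2) ≤ r * g t) :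
    IntegrableOn (fun y => y) (Ioc 0 b) μ := by
  refine ⟨measurable_id.aestronglyMeasurable, (hasFiniteIntegral_iff_ofReal
    ((ae_restrict_mem measurableSet_Ioc).mono fun y hy => hy.1.le)).2 ?_⟩
  refine lintegral_Ioc_zero_lt_top_of_le_geometric (C := ENNReal.ofReal (2 * g b))
    (r := ENNReal.ofReal r) ENNReal.ofReal_ne_top (ENNReal.ofReal_lt_one.2 hr₁) fun n => ?_
  have ht : b / 2 ^ n ∈ Ioc 0 b := ⟨by positivity, div_le_self hb.le (one_le_pow₀ one_le_two)⟩
  set t := b / 2 ^ n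
  calc ∫⁻ y in Ioc (b / 2 ^ (n + 1)) t, ENNReal.ofReal y ∂μ
      = ∫⁻ y in Ioc (t / 2) t, ENNReal.ofReal y ∂μ := by rw [pow_succ, ← div_div]
    _ ≤ ENNReal.ofReal (2 / t) * ∫⁻ y in Ioc 0 t, ENNReal.ofReal (y ^ 2) ∂μ :=
        lintegral_Ioc_half_ofReal_le μ ht.1
    _ ≤ ENNReal.ofReal (2 / t) * ENNReal.ofReal (t * g t) := by gcongr; exact hsq t ht
    _ = ENNReal.ofReal (2 * g t) := by
        rw [← ENNReal.ofReal_mul (by positivity)]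
        congr 1
        field_simp [ht.1.ne']
    _ ≤ ENNReal.ofReal (2 * (g b * r ^ n)) := by
        gcongr
        exact le_mul_pow_of_comp_half_le hb hr₀ hg n
    _ = ENNReal.ofReal (2 * g b) * ENNReal.ofReal r ^ n := by
        rw [← mul_assoc, ENNReal.ofReal_mul' (by positivity), ENNReal.ofReal_pow hr₀]

lemma exists_eventually_rpow_mul_comp_half_lt {ρ : ℝ} (hρ : 1 < ρ) {M : ℝ → ℝ}
    (hMpos : ∀ x : ℝ, 0 < x → 0 < M x)
    (hMhalf : Tendsto (fun t => M (t * (1 / 2)) / M t) (𝓝[>] 0) (𝓝 1)) :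
    ∃ r ∈ Ioo (0 : ℝ) 1,
      ∀ᶠ t in 𝓝[>] 0, (t / 2) ^ (ρ - 1) * M (t / 2) < r * (t ^ (ρ - 1) * M t) := by
  have h2ρ : 1 < (2 : ℝ) ^ (ρ - 1) := Real.one_lt_rpow one_lt_two (by linarith)
  have hlim : Tendsto (fun t => (t / 2) ^ (ρ - 1) * M (t / 2) / (t ^ (ρ - 1) * M t))
      (𝓝[>] 0) (𝓝 (1 / 2 ^ (ρ - 1))) := by
    refine (hMhalf.div_const _).congr' ?_
    filter_upwards [self_mem_nhdsWithin] with t (ht : 0 < t)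
    have := hMpos t ht
    rw [Real.div_rpow ht.le zero_le_two, ← div_eq_mul_one_div]
    field_simp
  obtain ⟨r, hr₀, hr₁⟩ := exists_between (div_lt_one (by positivity) |>.2 h2ρ)
  refine ⟨r, ⟨lt_trans (by positivity) hr₀, hr₁⟩, ?_⟩
  filter_upwards [hlim.eventually_lt_const hr₀, self_mem_nhdsWithin] with t h (ht : 0 < t)
  have := hMpos t ht
  rwa [div_lt_iff₀ (by positivity)] at h

lemma integrableOn_sq_Ioc_zero_one {ν : Measure ℝ}
    (hν : ∫⁻ y, ENNReal.ofReal (min (y ^ 2) 1) ∂ν < ⊤) :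
    IntegrableOn (fun y => y ^ 2) (Ioc 0 1) ν := by
  have : Integrable (fun y : ℝ => min (y ^ 2) 1) ν :=
    ⟨by fun_prop, (hasFiniteIntegral_iff_ofReal (ae_of_all _ fun y => by positivity)).2 hν⟩
  refine this.integrableOn.congr_fun (fun y ⟨hy₀, hy₁⟩ => min_eq_left ?_) measurableSet_Ioc
  nlinarith

lemma integrableOn_Ioc_zero_one_of_regularVariation {ν : Measure ℝ}
    (hν : ∫⁻ y, ENNReal.ofReal (min (y ^ 2) 1) ∂ν < ⊤) {ρ : ℝ} (hρ : 1 < ρ) {M : ℝ → ℝ}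
    (hMpos : ∀ x : ℝ, 0 < x → 0 < M x)
    (hMhalf : Tendsto (fun t => M (t * (1 / 2)) / M t) (𝓝[>] 0) (𝓝 1))
    (hasymp : Tendsto (fun x => (∫ y in Ioc (0 : ℝ) x, y ^ 2 ∂ν) / (x ^ ρ * M x))
      (𝓝[>] 0) (𝓝 1)) :
    IntegrableOn (fun y => y) (Ioc 0 1) ν := by
  obtain ⟨r, ⟨hr₀, hr₁⟩, hhalf⟩ := exists_eventually_rpow_mul_comp_half_lt hρ hMpos hMhalf
  obtain ⟨δ, hδ, hδsub⟩ := mem_nhdsGT_iff_exists_Ioc_subset.1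
    (hhalf.and (hasymp.eventually_lt_const (one_lt_two : (1 : ℝ) < 2)))
  have hsq := integrableOn_sq_Ioc_zero_one hν
  set b := min δ 1
  have hb : 0 < b := lt_min hδ one_pos
  have hsmall : ∀ t ∈ Ioc 0 b, t ∈ Ioc 0 δ ∧ t ≤ 1 :=
    fun t ⟨ht₀, htb⟩ => ⟨⟨ht₀, htb.trans (min_le_left _ _)⟩, htb.trans (min_le_right _ _)⟩
  have hnear : IntegrableOn (fun y => y) (Ioc 0 b) ν := by
    refine integrableOn_Ioc_zero_of_lintegral_sq_le (g := fun t => 2 * (t ^ (ρ - 1) * M t))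
      hb hr₀.le hr₁ (fun t ht => ?_) (fun t ht => ?_)
    · obtain ⟨htδ, ht₁⟩ := hsmall t ht
      have hden : 0 < t ^ ρ * M t := mul_pos (by have := ht.1; positivity) (hMpos t ht.1)
      have hlt := (div_lt_iff₀ hden).1 (hδsub htδ).2
      rw [← ofReal_integral_eq_lintegral_ofReal (hsq.mono_set (Ioc_subset_Ioc_right ht₁))
        (ae_of_all _ fun y => sq_nonneg y)]
      refine ENNReal.ofReal_le_ofReal (hlt.le.trans_eq ?_)
      rw [Real.rpow_sub_one ht.1.ne']
      field_simp [ht.1.ne']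
    · linarith [(hδsub (hsmall t ht).1).1]
  have hfar : IntegrableOn (fun y => y) (Ioc b 1) ν := by
    refine Integrable.mono' ((hsq.mono_set (Ioc_subset_Ioc_left hb.le)).div_const b)
      measurable_id.aestronglyMeasurable ((ae_restrict_mem measurableSet_Ioc).mono ?_)
    rintro y ⟨hby, -⟩
    rw [Real.norm_of_nonneg (hb.trans hby).le, le_div_iff₀ hb]
    nlinarith
  simpa [Ioc_union_Ioc_eq_Ioc hb.le (min_le_right δ 1)] using hnear.union hfar

lemma mul_indicator_sub_exp_le {y : ℝ} (hy : 0 ≤ y) (z : ℝ) :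
    y * ((Ioo (-1 : ℝ) 1).indicator 1 y - Real.exp (-(z * y)))
      ≤ (Ioc 0 1).indicator (fun y => y) y := by
  have hind : y * (Ioo (-1 : ℝ) 1).indicator 1 y ≤ (Ioc 0 1).indicator (fun y => y) y := by
    rcases hy.eq_or_lt with rfl | hy₀
    · simp
    by_cases hy₁ : y < 1
    · rw [indicator_of_mem (show y ∈ Ioo (-1) 1 from ⟨by linarith, hy₁⟩),
        indicator_of_mem (show y ∈ Ioc 0 1 from ⟨hy₀, hy₁.le⟩), Pi.one_apply, mul_one]
    · rw [indicator_of_notMem fun h => hy₁ h.2, mul_zero]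
      exact indicator_nonneg (fun y hy => hy.1.le) y
  nlinarith [mul_nonneg hy (Real.exp_pos (-(z * y))).le]

lemma Jprime_zero_le {ν : Measure ℝ} (hpos : ∀ᵐ y ∂ν, 0 ≤ y)
    (hint : IntegrableOn (fun y => y) (Ioc 0 1) ν) (a z : ℝ) :
    Jprime ν a 0 z ≤ -a + max 0 (∫ y in Ioc 0 1, y ∂ν) := by
  rw [Jprime, zero_mul, add_zero, add_le_add_iff_left]
  by_cases hi : Integrable (fun y => y * ((Ioo (-1 : ℝ) 1).indicator 1 y - Real.exp (-(z * y)))) ν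
  · calc _ ≤ ∫ y, (Ioc 0 1).indicator (fun y => y) y ∂ν :=
          integral_mono_ae hi (hint.integrable_indicator measurableSet_Ioc)
            (hpos.mono fun y hy => mul_indicator_sub_exp_le hy z)
      _ = ∫ y in Ioc 0 1, y ∂ν := integral_indicator measurableSet_Ioc
      _ ≤ _ := le_max_right _ _
  · rw [integral_undef hi]
    exact le_max_left _ _

lemma limsup_log_sub_mul_eq_top {f : ℝ → ℝ} {B c : ℝ} (hc : 0 ≤ c) (hf : ∀ z, f z ≤ B) :
    limsup (fun z : ℝ => ((Real.log z - c * f z : ℝ) : EReal)) atTop = ⊤ := by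
  have hlim : Tendsto (fun z => Real.log z - c * f z) atTop atTop :=
    tendsto_atTop_mono (fun z => by nlinarith [hf z])
      (tendsto_atTop_add_const_right _ (-(c * B)) Real.tendsto_log_atTop)
  exact (EReal.tendsto_coe_nhds_top_iff.2 hlim).limsup_eq

theorem jprime_limsup_top_of_rho_gt_one_general (ν : Measure ℝ) (a q : ℝ)
    (hν : ∫⁻ y, ENNReal.ofReal (min (y ^ 2) 1) ∂ν < ⊤)
    (hq0 : q = 0)
    (hsupp : measureSupport ν ⊆ Set.Ici 0)
    (ρ : ℝ) (hρ : 1 < ρ)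
    (M : ℝ → ℝ) (hMpos : ∀ x : ℝ, 0 < x → 0 < M x)
    (hMslow : ∀ x : ℝ, 0 < x →
      Filter.Tendsto (fun t => M (t * x) / M t) (nhdsWithin 0 (Set.Ioi 0)) (nhds 1))
    (hasymp : Filter.Tendsto
      (fun x => (∫ y in Set.Ioc (0 : ℝ) x, y ^ 2 ∂ν) / (x ^ ρ * M x))
      (nhdsWithin 0 (Set.Ioi 0)) (nhds 1)) :
    ∀ c : ℝ, 0 < c →
      Filter.limsup (fun z : ℝ => ((Real.log z - c * Jprime ν a q z : ℝ) : EReal))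
        Filter.atTop = ⊤ := by
  intro c hc
  subst hq0
  have hint := integrableOn_Ioc_zero_one_of_regularVariation hν hρ hMpos
    (hMslow _ one_half_pos) hasymp
  exact limsup_log_sub_mul_eq_top hc.le
    (Jprime_zero_le (ae_nonneg_of_measureSupport_subset_Ici hsupp) hint a)

/-- If `∫_{(0,x]} y² ν(dy) ∼ x^ρ M(x)` as `x → 0⁺` with `ρ > 1` and `M` slowly varying at `0`,
then `limsup_{z→∞} (ln z − c J′(z)) = +∞` for every `c > 0`. -/
theorem jprime_limsup_top_of_rho_gt_one (ν : Measure ℝ) (a q : ℝ) (hq : 0 ≤ q)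
    (hν : ∫⁻ y, ENNReal.ofReal (min (y ^ 2) 1) ∂ν < ⊤)
    (hq0 : q = 0)
    (hsupp : measureSupport ν ⊆ Set.Ici 0)
    (htail : IntegrableOn (fun y => y) (Set.Ici 1) ν)
    (ρ : ℝ) (hρ : 1 < ρ)
    (M : ℝ → ℝ) (hMpos : ∀ x : ℝ, 0 < x → 0 < M x)
    (hMslow : ∀ x : ℝ, 0 < x →
      Filter.Tendsto (fun t => M (t * x) / M t) (nhdsWithin 0 (Set.Ioi 0)) (nhds 1))
    (hasymp : Filter.Tendsto
      (fun x => (∫ y in Set.Ioc (0 : ℝ) x, y ^ 2 ∂ν) / (x ^ ρ * M x))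
      (nhdsWithin 0 (Set.Ioi 0)) (nhds 1)) :
    ∀ c : ℝ, 0 < c →
      Filter.limsup (fun z : ℝ => ((Real.log z - c * Jprime ν a q z : ℝ) : EReal))
        Filter.atTop = ⊤ :=
  jprime_limsup_top_of_rho_gt_one_general ν a q hν hq0 hsupp ρ hρ M hMpos hMslow hasymp
end

section
/- Let ν be a nonnegative Borel measure on ℝ and let g : [0,∞)² → [0,∞) be such that ḡ(y) := sup_{x ≥ 0} g(x,y) < +∞ for every y ≥ 0. Then the condition [ for all x ≥ 0, y ≥ 0 and u ∈ supp ν one has y + g(x,y)·u ≥ 0 ] holds if and only if supp ν ⊆ [ −inf{ y/ḡ(y) : y ≥ 0, ḡ(y) > 0 }, +∞ ), where the infimum over the empty set is +∞ (in which case the inclusion is trivially satisfied). -/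
open MeasureTheory

/-- `ḡ(y) = sup_{x ≥ 0} g(x,y)`. -/
noncomputable def gbar (g : ℝ → ℝ → ℝ) (y : ℝ) : ℝ :=
  sSup ((fun x => g x y) '' Set.Ici 0)

/-- The positivity condition `y + g(x,y)u ≥ 0` for all `x, y ≥ 0`, `u ∈ supp ν` holds
iff `supp ν ⊆ [−inf{y/ḡ(y) : y ≥ 0, ḡ(y) > 0}, +∞)`, where the infimum (taken in the
extended reals) over the empty set is `+∞`, in which case the inclusion holds trivially. -/
theorem positivity_iff_support_bound (ν : Measure ℝ) (g : ℝ → ℝ → ℝ)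
    (hg_nonneg : ∀ x y : ℝ, 0 ≤ x → 0 ≤ y → 0 ≤ g x y)
    (hbdd : ∀ y : ℝ, 0 ≤ y → BddAbove ((fun x => g x y) '' Set.Ici 0)) :
    (∀ x y : ℝ, 0 ≤ x → 0 ≤ y → ∀ u ∈ measureSupport ν, 0 ≤ y + g x y * u) ↔
    (∀ u ∈ measureSupport ν,
      -(sInf {z : EReal | ∃ y : ℝ, 0 ≤ y ∧ 0 < gbar g y ∧ z = ((y / gbar g y : ℝ) : EReal)})
        ≤ (u : EReal)) := by
  constructor
  · intro h u hu
    rw [EReal.neg_le]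
    apply le_sInf
    rintro z ⟨y, hy, hgb, rfl⟩
    -- gbar g y * (-u) ≤ y
    have key : 0 ≤ y + gbar g y * u := by
      rcases le_or_gt 0 u with hu0 | hu0
      · have := le_of_lt hgb
        nlinarith
      · have hne : ((fun x => g x y) '' Set.Ici 0).Nonempty :=
          ⟨g 0 y, ⟨0, Set.self_mem_Ici, rfl⟩⟩
        have hsup : gbar g y ≤ y / (-u) := by
          apply csSup_le hne
          rintro b ⟨x, hx, rfl⟩
          rw [le_div_iff₀ (by linarith)]
          have := h x y hx hy u hu
          nlinarith
        have : gbar g y * (-u) ≤ y := by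
          rw [← le_div_iff₀ (by linarith)]
          exact hsup
        linarith
    have hdu : -u ≤ y / gbar g y := by
      rw [le_div_iff₀ hgb]
      nlinarith
    calc (-u : EReal) = ((-u : ℝ) : EReal) := by rw [EReal.coe_neg]
      _ ≤ ((y / gbar g y : ℝ) : EReal) := by
          exact_mod_cast hdu
  · intro h x y hx hy u hu
    rcases le_or_gt 0 u with hu0 | hu0
    · have := hg_nonneg x y hx hy
      nlinarith
    · rcases eq_or_lt_of_le (hg_nonneg x y hx hy) with hg0 | hg0
      · rw [← hg0]; linarith
      · have hle : g x y ≤ gbar g y :=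
          le_csSup (hbdd y hy) ⟨x, hx, rfl⟩
        have hgb : 0 < gbar g y := lt_of_lt_of_le hg0 hle
        have hmem : ((y / gbar g y : ℝ) : EReal) ∈
            {z : EReal | ∃ y' : ℝ, 0 ≤ y' ∧ 0 < gbar g y' ∧ z = ((y' / gbar g y' : ℝ) : EReal)} :=
          ⟨y, hy, hgb, rfl⟩
        have h1 : -(((y / gbar g y : ℝ) : EReal)) ≤ (u : EReal) := by
          exact le_trans (EReal.neg_le_neg_iff.mpr (sInf_le hmem)) (h u hu)
        have h2 : (-(y / gbar g y) : ℝ) ≤ u := by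
          rw [← EReal.coe_le_coe_iff, EReal.coe_neg]
          exact h1
        have : gbar g y * (-u) ≤ y := by
          calc gbar g y * (-u) ≤ gbar g y * (y / gbar g y) := by
                apply mul_le_mul_of_nonneg_left _ hgb.le
                linarith
            _ = y := by field_simp
        have : g x y * (-u) ≤ gbar g y * (-u) := by
          apply mul_le_mul_of_nonneg_right hle (by linarith)
        linarith
end

section
/- Let γ > 0, let g : [0,∞)² → [0,∞) be measurable with g(x,0) = 0 and |g(x,u) − g(x,v)| ≤ C|u − v| for all x, u, v ≥ 0 (some C > 0), and let J′ : [0,∞) → ℝ be Lipschitz continuous on every bounded interval [0, z₀]. For a nonnegative r ∈ L^{2,γ} define F(r)(x) := J′( ∫₀ˣ g(v, r(v)) dv ) · g(x, r(x)). Then F is locally Lipschitz on the positive cone of L^{2,γ}: for every R > 0 there exists K_R > 0 such that ‖F(r) − F(r̄)‖_{L^{2,γ}} ≤ K_R ‖r − r̄‖_{L^{2,γ}} for all nonnegative r, r̄ ∈ L^{2,γ} with ‖r‖_{L^{2,γ}} ≤ R and ‖r̄‖_{L^{2,γ}} ≤ R. -/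
/-!
With `I_q(x) = ∫₀ˣ g(v, q v) dv`, split
`F(r) - F(r̄) = (J'(I_r) - J'(I_r̄)) · g(·, r) + J'(I_r̄) · (g(·, r) - g(·, r̄))`.
Cauchy–Schwarz against the weight `e^{-γx}` gives `‖q‖_{L¹(0,∞)} ≤ γ^{-1/2} ‖q‖_{L^{2,γ}}`,
so on the ball of radius `R` every primitive `I_q` takes values in `[0, z]` with `z = C γ^{-1/2} R`.
There `J'` is `K`-Lipschitz and bounded by `|J'(0)| + K z`, whence pointwise
`|F(r) - F(r̄)| ≤ K C² ‖r - r̄‖_{L¹} · r + (|J'(0)| + K z) C · |r - r̄|`,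
and Minkowski's inequality in `L^{2,γ} = L²(e^{γx} dx)`, together with the `L¹` bound for `r - r̄`,
finishes the proof.
-/

open MeasureTheory

/-- The `L^{2,γ}` norm of a function on `[0,∞)` (valued in `ℝ≥0∞`):
`‖f‖_{L^{2,γ}} = (∫₀^∞ |f(x)|² e^{γx} dx)^{1/2}`. -/
noncomputable def L2gammaNorm (γ : ℝ) (f : ℝ → ℝ) : ENNReal :=
  (∫⁻ x in Set.Ioi (0 : ℝ), ENNReal.ofReal (f x ^ 2 * Real.exp (γ * x))) ^ ((1 : ℝ) / 2)

/-- The drift transformation `F(r)(x) = J′(∫₀ˣ g(v, r(v)) dv) · g(x, r(x))`. -/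
noncomputable def driftMap (g : ℝ → ℝ → ℝ) (J' : ℝ → ℝ) (r : ℝ → ℝ) (x : ℝ) : ℝ :=
  J' (∫ v in (0 : ℝ)..x, g v (r v)) * g x (r x)

open Set
open scoped ENNReal NNReal

noncomputable def expWeightedVolume (γ : ℝ) : Measure ℝ :=
  (volume.restrict (Ioi 0)).withDensity fun x => ENNReal.ofReal (Real.exp (γ * x))

theorem lintegral_expWeightedVolume (γ : ℝ) (F : ℝ → ℝ≥0∞) :
    ∫⁻ x, F x ∂expWeightedVolume γ = ∫⁻ x in Ioi 0, ENNReal.ofReal (Real.exp (γ * x)) * F x :=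
  lintegral_withDensity_eq_lintegral_mul_non_measurable _ (by fun_prop)
    (ae_of_all _ fun _ => ENNReal.ofReal_lt_top) F

theorem ae_expWeightedVolume_of_forall_Ioi {γ : ℝ} {P : ℝ → Prop} (h : ∀ x ∈ Ioi (0 : ℝ), P x) :
    ∀ᵐ x ∂expWeightedVolume γ, P x :=
  withDensity_absolutelyContinuous _ _ (ae_restrict_of_forall_mem measurableSet_Ioi h)

theorem L2gammaNorm_eq_eLpNorm (γ : ℝ) (f : ℝ → ℝ) :
    L2gammaNorm γ f = eLpNorm f 2 (expWeightedVolume γ) := by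
  rw [eLpNorm_eq_lintegral_rpow_enorm_toReal (by norm_num) (by norm_num), L2gammaNorm,
    lintegral_expWeightedVolume]
  congr 1
  refine lintegral_congr fun x => ?_
  rw [mul_comm, ENNReal.ofReal_mul (Real.exp_nonneg _), Real.enorm_eq_ofReal_abs,
    ENNReal.toReal_ofNat, ENNReal.ofReal_rpow_of_nonneg (abs_nonneg _) zero_le_two,
    Real.rpow_two, sq_abs]

theorem L2gammaNorm_abs (γ : ℝ) (f : ℝ → ℝ) :
    L2gammaNorm γ (fun x => |f x|) = L2gammaNorm γ f := by
  simp only [L2gammaNorm, sq_abs]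

theorem L2gammaNorm_le_of_abs_le_add {γ a b : ℝ} {φ f₁ f₂ : ℝ → ℝ}
    (hf₁ : AEStronglyMeasurable f₁ (expWeightedVolume γ))
    (hf₂ : AEStronglyMeasurable f₂ (expWeightedVolume γ))
    (hφ : ∀ x ∈ Ioi (0 : ℝ), |φ x| ≤ a * f₁ x + b * f₂ x) :
    L2gammaNorm γ φ ≤ ‖a‖ₑ * L2gammaNorm γ f₁ + ‖b‖ₑ * L2gammaNorm γ f₂ := by
  simp only [L2gammaNorm_eq_eLpNorm, ← eLpNorm_const_smul]
  calc eLpNorm φ 2 (expWeightedVolume γ)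
      ≤ eLpNorm (a • f₁ + b • f₂) 2 (expWeightedVolume γ) :=
        eLpNorm_mono_ae_real (ae_expWeightedVolume_of_forall_Ioi hφ)
    _ ≤ _ := eLpNorm_add_le (hf₁.const_smul a) (hf₂.const_smul b) one_le_two

theorem integral_exp_neg_mul_Ioi {γ : ℝ} (hγ : 0 < γ) :
    ∫ x in Ioi (0 : ℝ), Real.exp (-γ * x) = γ⁻¹ := by
  rw [integral_exp_mul_Ioi (neg_lt_zero.2 hγ)]
  simp [neg_div, div_neg]

theorem L2gammaNorm_exp_neg {γ : ℝ} (hγ : 0 < γ) :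
    L2gammaNorm γ (fun x => Real.exp (-γ * x)) = ENNReal.ofReal (√γ⁻¹) := by
  have hexp : ∀ x, Real.exp (-γ * x) ^ 2 * Real.exp (γ * x) = Real.exp (-γ * x) := fun x => by
    rw [sq, mul_assoc, ← Real.exp_add, ← Real.exp_add]
    ring_nf
  simp only [L2gammaNorm, hexp]
  rw [← ofReal_integral_eq_lintegral_ofReal (integrableOn_exp_mul_Ioi (neg_lt_zero.2 hγ) 0)
      (ae_of_all _ fun _ => Real.exp_nonneg _), integral_exp_neg_mul_Ioi hγ,
    ENNReal.ofReal_rpow_of_nonneg (inv_nonneg.2 hγ.le) (by norm_num), Real.sqrt_eq_rpow]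

theorem lintegral_enorm_le_L2gammaNorm {γ : ℝ} (hγ : 0 < γ) {h : ℝ → ℝ}
    (hh : AEStronglyMeasurable h (expWeightedVolume γ)) :
    ∫⁻ x in Ioi 0, ‖h x‖ₑ ≤ ENNReal.ofReal (√γ⁻¹) * L2gammaNorm γ h := by
  have hweight : ∫⁻ x in Ioi 0, ‖h x‖ₑ
      = eLpNorm ((fun x => Real.exp (-γ * x)) • h) 1 (expWeightedVolume γ) := by
    rw [eLpNorm_one_eq_lintegral_enorm, lintegral_expWeightedVolume]
    refine setLIntegral_congr_fun measurableSet_Ioi fun x _ => ?_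
    rw [Pi.smul_apply', smul_eq_mul, enorm_mul, Real.enorm_of_nonneg (Real.exp_nonneg _),
      ← mul_assoc, ← ENNReal.ofReal_mul (Real.exp_nonneg _), ← Real.exp_add]
    simp
  rw [hweight, ← L2gammaNorm_exp_neg hγ, L2gammaNorm_eq_eLpNorm, L2gammaNorm_eq_eLpNorm]
  exact eLpNorm_smul_le_mul_eLpNorm hh (by fun_prop)

theorem ofReal_integral_abs_le_L2gammaNorm {γ : ℝ} (hγ : 0 < γ) {h : ℝ → ℝ}
    (hh : AEStronglyMeasurable h (volume.restrict (Ioi 0))) :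
    ENNReal.ofReal (∫ x in Ioi 0, |h x|) ≤ ENNReal.ofReal (√γ⁻¹) * L2gammaNorm γ h := by
  by_cases hint : IntegrableOn h (Ioi 0)
  · simp only [← Real.norm_eq_abs, ofReal_integral_norm_eq_lintegral_enorm hint]
    exact lintegral_enorm_le_L2gammaNorm hγ
      (hh.mono_ac (withDensity_absolutelyContinuous _ _))
  · have habs : ¬IntegrableOn (fun x => |h x|) (Ioi 0) := fun habs =>
      hint ((integrable_norm_iff hh).1 habs)
    simp [integral_undef habs]

theorem integrableOn_Ioi_of_L2gammaNorm_ne_top {γ : ℝ} (hγ : 0 < γ) {h : ℝ → ℝ}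
    (hh : AEStronglyMeasurable h (volume.restrict (Ioi 0))) (hfin : L2gammaNorm γ h ≠ ∞) :
    IntegrableOn h (Ioi 0) :=
  ⟨hh, (lintegral_enorm_le_L2gammaNorm hγ (hh.mono_ac (withDensity_absolutelyContinuous _ _)))
    |>.trans_lt (ENNReal.mul_lt_top ENNReal.ofReal_lt_top hfin.lt_top)⟩

theorem integral_abs_le_of_L2gammaNorm_le {γ R : ℝ} (hγ : 0 < γ) (hR : 0 ≤ R) {h : ℝ → ℝ}
    (hh : AEStronglyMeasurable h (volume.restrict (Ioi 0)))
    (hhR : L2gammaNorm γ h ≤ ENNReal.ofReal R) :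
    ∫ x in Ioi 0, |h x| ≤ √γ⁻¹ * R := by
  rw [← ENNReal.ofReal_le_ofReal_iff (by positivity), ENNReal.ofReal_mul (Real.sqrt_nonneg _)]
  exact (ofReal_integral_abs_le_L2gammaNorm hγ hh).trans (by gcongr)

theorem intervalIntegral_le_integral_Ioi {f : ℝ → ℝ} {a x : ℝ} (hf : IntegrableOn f (Ioi a))
    (hnn : ∀ v ∈ Ioi a, 0 ≤ f v) (hx : a ≤ x) : ∫ v in a..x, f v ≤ ∫ v in Ioi a, f v := by
  rw [intervalIntegral.integral_of_le hx]
  exact setIntegral_mono_set hf (ae_restrict_of_forall_mem measurableSet_Ioi hnn)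
    Ioc_subset_Ioi_self.eventuallyLE

theorem LipschitzOnWith.abs_mul_sub_mul_le {J : ℝ → ℝ} {K : ℝ≥0} {z : ℝ}
    (hJ : LipschitzOnWith K J (Icc 0 z)) {a b u v : ℝ} (ha : a ∈ Icc 0 z) (hb : b ∈ Icc 0 z) :
    |J a * u - J b * v| ≤ K * |a - b| * |u| + (|J 0| + K * z) * |u - v| := by
  have hJab : |J a - J b| ≤ K * |a - b| := by
    simpa only [Real.dist_eq] using hJ.dist_le_mul a ha b hb
  have hJb : |J b| ≤ |J 0| + K * z := by
    have h := hJ.dist_le_mul b hb 0 (left_mem_Icc.2 (hb.1.trans hb.2))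
    rw [Real.dist_eq, Real.dist_eq, sub_zero, abs_of_nonneg hb.1] at h
    have hKz : (K : ℝ) * b ≤ K * z := by gcongr; exact hb.2
    linarith [abs_sub_abs_le_abs_sub (J b) (J 0)]
  calc |J a * u - J b * v| = |(J a - J b) * u + J b * (u - v)| := by ring_nf
    _ ≤ |J a - J b| * |u| + |J b| * |u - v| := by
        rw [← abs_mul, ← abs_mul]; exact abs_add_le _ _
    _ ≤ K * |a - b| * |u| + (|J 0| + K * z) * |u - v| := by gcongr

section LipschitzInSecondVariable

variable {C : ℝ} {g : ℝ → ℝ → ℝ}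
  (hgLip : ∀ x u v : ℝ, 0 ≤ x → 0 ≤ u → 0 ≤ v → |g x u - g x v| ≤ C * |u - v|)
include hgLip

theorem abs_apply_le_mul (hg0 : ∀ x : ℝ, 0 ≤ x → g x 0 = 0) {x y : ℝ} (hx : 0 ≤ x)
    (hy : 0 ≤ y) : |g x y| ≤ C * y := by
  simpa [hg0 x hx, abs_of_nonneg hy] using hgLip x y 0 hx hy le_rfl

theorem integrableOn_Ioi_comp (hgmeas : Measurable (Function.uncurry g))
    (hg0 : ∀ x : ℝ, 0 ≤ x → g x 0 = 0) {q : ℝ → ℝ} (hq : Measurable q) (hqnn : ∀ x, 0 ≤ q x)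
    (hqint : IntegrableOn q (Ioi 0)) : IntegrableOn (fun v => g v (q v)) (Ioi 0) :=
  (hqint.const_mul C).mono' (hgmeas.comp (measurable_id.prodMk hq)).aestronglyMeasurable
    (ae_restrict_of_forall_mem measurableSet_Ioi fun v hv =>
      abs_apply_le_mul hgLip hg0 (le_of_lt hv) (hqnn v))

theorem intervalIntegral_comp_mem_Icc {γ R : ℝ} (hγ : 0 < γ) (hR : 0 ≤ R) (hC : 0 ≤ C)
    (hgmeas : Measurable (Function.uncurry g)) (hg0 : ∀ x : ℝ, 0 ≤ x → g x 0 = 0)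
    (hgnn : ∀ x y : ℝ, 0 ≤ x → 0 ≤ y → 0 ≤ g x y) {q : ℝ → ℝ} (hq : Measurable q)
    (hqnn : ∀ x, 0 ≤ q x) (hqR : L2gammaNorm γ q ≤ ENNReal.ofReal R) {x : ℝ} (hx : 0 ≤ x) :
    ∫ v in 0..x, g v (q v) ∈ Icc 0 (C * (√γ⁻¹ * R)) := by
  have hqint := integrableOn_Ioi_of_L2gammaNorm_ne_top hγ hq.aestronglyMeasurable
    (ne_top_of_le_ne_top ENNReal.ofReal_ne_top hqR)
  have hGint := integrableOn_Ioi_comp hgLip hgmeas hg0 hq hqnn hqint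
  refine ⟨intervalIntegral.integral_nonneg hx fun v hv => hgnn v _ hv.1 (hqnn v), ?_⟩
  calc ∫ v in 0..x, g v (q v)
      ≤ ∫ v in Ioi 0, g v (q v) :=
        intervalIntegral_le_integral_Ioi hGint (fun v hv => hgnn v _ (le_of_lt hv) (hqnn v)) hx
    _ ≤ ∫ v in Ioi 0, C * |q v| :=
        setIntegral_mono_on hGint (hqint.abs.const_mul C) measurableSet_Ioi fun v hv =>
          (le_abs_self _).trans ((abs_apply_le_mul hgLip hg0 (le_of_lt hv) (hqnn v)).trans_eq
            (by rw [abs_of_nonneg (hqnn v)]))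
    _ = C * ∫ v in Ioi 0, |q v| := integral_const_mul _ _
    _ ≤ C * (√γ⁻¹ * R) := by
        gcongr; exact integral_abs_le_of_L2gammaNorm_le hγ hR hq.aestronglyMeasurable hqR

theorem abs_intervalIntegral_comp_sub_le {r rb : ℝ → ℝ} (hrnn : ∀ x, 0 ≤ r x)
    (hrbnn : ∀ x, 0 ≤ rb x) (hGr : IntegrableOn (fun v => g v (r v)) (Ioi 0))
    (hGrb : IntegrableOn (fun v => g v (rb v)) (Ioi 0))
    (hint : IntegrableOn (fun v => r v - rb v) (Ioi 0)) {x : ℝ} (hx : 0 ≤ x) :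
    |(∫ v in 0..x, g v (r v)) - ∫ v in 0..x, g v (rb v)| ≤ C * ∫ v in Ioi 0, |r v - rb v| := by
  have hsub := hGr.sub hGrb
  have hIoc : Ioc 0 x ⊆ Ioi 0 := Ioc_subset_Ioi_self
  rw [← integral_const_mul]
  calc |(∫ v in 0..x, g v (r v)) - ∫ v in 0..x, g v (rb v)|
      = |∫ v in 0..x, (g v (r v) - g v (rb v))| := by
        rw [intervalIntegral.integral_sub
          ((intervalIntegrable_iff_integrableOn_Ioc_of_le hx).2 (hGr.mono_set hIoc))
          ((intervalIntegrable_iff_integrableOn_Ioc_of_le hx).2 (hGrb.mono_set hIoc))]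
    _ ≤ ∫ v in 0..x, |g v (r v) - g v (rb v)| := intervalIntegral.abs_integral_le_integral_abs hx
    _ ≤ ∫ v in Ioi 0, |g v (r v) - g v (rb v)| :=
        intervalIntegral_le_integral_Ioi hsub.abs (fun _ _ => abs_nonneg _) hx
    _ ≤ ∫ v in Ioi 0, C * |r v - rb v| :=
        setIntegral_mono_on hsub.abs (hint.abs.const_mul C) measurableSet_Ioi fun v hv =>
          hgLip v _ _ (le_of_lt hv) (hrnn v) (hrbnn v)

theorem abs_driftMap_sub_le (hg0 : ∀ x : ℝ, 0 ≤ x → g x 0 = 0) {J' : ℝ → ℝ} {K : ℝ≥0} {z : ℝ}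
    (hJ : LipschitzOnWith K J' (Icc 0 z)) {r rb : ℝ → ℝ} (hrnn : ∀ x, 0 ≤ r x)
    (hrbnn : ∀ x, 0 ≤ rb x) (hGr : IntegrableOn (fun v => g v (r v)) (Ioi 0))
    (hGrb : IntegrableOn (fun v => g v (rb v)) (Ioi 0))
    (hint : IntegrableOn (fun v => r v - rb v) (Ioi 0)) {x : ℝ} (hx : 0 ≤ x)
    (hIr : ∫ v in 0..x, g v (r v) ∈ Icc 0 z) (hIrb : ∫ v in 0..x, g v (rb v) ∈ Icc 0 z) :
    |driftMap g J' r x - driftMap g J' rb x| ≤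
      (K * C ^ 2 * ∫ v in Ioi 0, |r v - rb v|) * r x + ((|J' 0| + K * z) * C) * |r x - rb x| := by
  have hI := abs_intervalIntegral_comp_sub_le hgLip hrnn hrbnn hGr hGrb hint hx
  have hgr := abs_apply_le_mul hgLip hg0 hx (hrnn x)
  have hgrb := hgLip x _ _ hx (hrnn x) (hrbnn x)
  have hM : 0 ≤ |J' 0| + K * z := by
    have hz : 0 ≤ z := hIr.1.trans hIr.2
    positivity
  calc |driftMap g J' r x - driftMap g J' rb x|
      ≤ K * |(∫ v in 0..x, g v (r v)) - ∫ v in 0..x, g v (rb v)| * |g x (r x)|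
        + (|J' 0| + K * z) * |g x (r x) - g x (rb x)| := hJ.abs_mul_sub_mul_le hIr hIrb
    _ ≤ K * (C * ∫ v in Ioi 0, |r v - rb v|) * (C * r x)
        + (|J' 0| + K * z) * (C * |r x - rb x|) := by
          gcongr
          exact mul_nonneg K.2 ((abs_nonneg _).trans hI)
    _ = _ := by ring

theorem L2gammaNorm_driftMap_sub_le {γ : ℝ} (hγ : 0 < γ) (hC : 0 ≤ C)
    (hgmeas : Measurable (Function.uncurry g)) (hg0 : ∀ x : ℝ, 0 ≤ x → g x 0 = 0)
    {J' : ℝ → ℝ} {K : ℝ≥0} {z : ℝ} (hJ : LipschitzOnWith K J' (Icc 0 z)) {r rb : ℝ → ℝ}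
    (hr : Measurable r) (hrb : Measurable rb) (hrnn : ∀ x, 0 ≤ r x) (hrbnn : ∀ x, 0 ≤ rb x)
    (hrfin : L2gammaNorm γ r ≠ ∞) (hrbfin : L2gammaNorm γ rb ≠ ∞)
    (hIr : ∀ x ∈ Ioi (0 : ℝ), ∫ v in 0..x, g v (r v) ∈ Icc 0 z)
    (hIrb : ∀ x ∈ Ioi (0 : ℝ), ∫ v in 0..x, g v (rb v) ∈ Icc 0 z) :
    L2gammaNorm γ (fun x => driftMap g J' r x - driftMap g J' rb x) ≤
      (ENNReal.ofReal (K * C ^ 2 * √γ⁻¹) * L2gammaNorm γ r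
        + ENNReal.ofReal ((|J' 0| + K * z) * C)) * L2gammaNorm γ (fun x => r x - rb x) := by
  have hrint := integrableOn_Ioi_of_L2gammaNorm_ne_top hγ hr.aestronglyMeasurable hrfin
  have hrbint := integrableOn_Ioi_of_L2gammaNorm_ne_top hγ hrb.aestronglyMeasurable hrbfin
  have hpt := fun x (hx : x ∈ Ioi (0 : ℝ)) => abs_driftMap_sub_le hgLip hg0 hJ hrnn hrbnn
    (integrableOn_Ioi_comp hgLip hgmeas hg0 hr hrnn hrint)
    (integrableOn_Ioi_comp hgLip hgmeas hg0 hrb hrbnn hrbint) (hrint.sub hrbint) (le_of_lt hx)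
    (hIr x hx) (hIrb x hx)
  set D := ∫ v in Ioi 0, |r v - rb v|
  set M := |J' 0| + K * z
  have hM : 0 ≤ M := by
    obtain ⟨hI0, hIz⟩ := hIr 1 (mem_Ioi.2 one_pos)
    have hz : 0 ≤ z := hI0.trans hIz
    positivity
  have hD : ENNReal.ofReal D ≤ ENNReal.ofReal √γ⁻¹ * L2gammaNorm γ (fun x => r x - rb x) :=
    ofReal_integral_abs_le_L2gammaNorm hγ (hr.sub hrb).aestronglyMeasurable
  calc L2gammaNorm γ (fun x => driftMap g J' r x - driftMap g J' rb x)
      ≤ ‖K * C ^ 2 * D‖ₑ * L2gammaNorm γ r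
        + ‖M * C‖ₑ * L2gammaNorm γ (fun x => |r x - rb x|) :=
        L2gammaNorm_le_of_abs_le_add hr.aestronglyMeasurable
          (hr.sub hrb).abs.aestronglyMeasurable hpt
    _ = ENNReal.ofReal (K * C ^ 2) * ENNReal.ofReal D * L2gammaNorm γ r
          + ENNReal.ofReal (M * C) * L2gammaNorm γ (fun x => r x - rb x) := by
        rw [L2gammaNorm_abs, Real.enorm_of_nonneg (by positivity),
          Real.enorm_of_nonneg (by positivity), ENNReal.ofReal_mul (by positivity)]
    _ ≤ ENNReal.ofReal (K * C ^ 2)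
          * (ENNReal.ofReal √γ⁻¹ * L2gammaNorm γ (fun x => r x - rb x)) * L2gammaNorm γ r
          + ENNReal.ofReal (M * C) * L2gammaNorm γ (fun x => r x - rb x) := by
        gcongr
    _ = _ := by
        rw [ENNReal.ofReal_mul (by positivity) (q := √γ⁻¹)]
        ring

end LipschitzInSecondVariable

/-- If `J′` is Lipschitz on every bounded interval `[0, z₀]` and `g` is nonnegative,
vanishes at `y = 0` and is `C`-Lipschitz in its second variable, then `F` is locally
Lipschitz on the positive cone of `L^{2,γ}`. -/
theorem drift_locally_lipschitz (γ C : ℝ) (hγ : 0 < γ) (hC : 0 < C)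
    (g : ℝ → ℝ → ℝ) (hgmeas : Measurable (Function.uncurry g))
    (hg0 : ∀ x : ℝ, 0 ≤ x → g x 0 = 0)
    (hgnn : ∀ x y : ℝ, 0 ≤ x → 0 ≤ y → 0 ≤ g x y)
    (hgLip : ∀ x u v : ℝ, 0 ≤ x → 0 ≤ u → 0 ≤ v → |g x u - g x v| ≤ C * |u - v|)
    (J' : ℝ → ℝ)
    (hJLip : ∀ z₀ : ℝ, 0 < z₀ → ∃ K : NNReal, LipschitzOnWith K J' (Set.Icc 0 z₀)) :
    ∀ R : ℝ, 0 < R → ∃ K : ℝ, 0 < K ∧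
      ∀ r rb : ℝ → ℝ, Measurable r → Measurable rb →
        (∀ x, 0 ≤ r x) → (∀ x, 0 ≤ rb x) →
        L2gammaNorm γ r ≤ ENNReal.ofReal R → L2gammaNorm γ rb ≤ ENNReal.ofReal R →
        L2gammaNorm γ (fun x => driftMap g J' r x - driftMap g J' rb x) ≤
          ENNReal.ofReal K * L2gammaNorm γ (fun x => r x - rb x) := by
  intro R hR
  set z := C * (√γ⁻¹ * R)
  obtain ⟨K, hJ⟩ := hJLip z (by positivity)
  set a := K * C ^ 2 * √γ⁻¹
  set b := (|J' 0| + K * z) * C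
  refine ⟨a * R + b + 1, by positivity, ?_⟩
  intro r rb hr hrb hrnn hrbnn hrR hrbR
  have hI : ∀ q : ℝ → ℝ, Measurable q → (∀ x, 0 ≤ q x) → L2gammaNorm γ q ≤ ENNReal.ofReal R →
      ∀ x ∈ Ioi (0 : ℝ), ∫ v in 0..x, g v (q v) ∈ Icc 0 z := fun q hq hqnn hqR x hx =>
    intervalIntegral_comp_mem_Icc hgLip hγ hR.le hC.le hgmeas hg0 hgnn hq hqnn hqR (le_of_lt hx)
  refine (L2gammaNorm_driftMap_sub_le hgLip hγ hC.le hgmeas hg0 hJ hr hrb hrnn hrbnn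
    (ne_top_of_le_ne_top ENNReal.ofReal_ne_top hrR)
    (ne_top_of_le_ne_top ENNReal.ofReal_ne_top hrbR)
    (hI r hr hrnn hrR) (hI rb hrb hrbnn hrbR)).trans ?_
  gcongr
  calc ENNReal.ofReal a * L2gammaNorm γ r + ENNReal.ofReal b
      ≤ ENNReal.ofReal a * ENNReal.ofReal R + ENNReal.ofReal b := by gcongr
    _ = ENNReal.ofReal (a * R + b) := by
        rw [← ENNReal.ofReal_mul (p := a) (by positivity),
          ← ENNReal.ofReal_add (by positivity) (by positivity)]
    _ ≤ ENNReal.ofReal (a * R + b + 1) := ENNReal.ofReal_le_ofReal (by linarith)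
end

section
/- Let T* > 0 and C > 0, and let d : [0, T*] × [0, ∞) → [0, ∞) be a bounded measurable function satisfying d(t,x) ≤ C ∫₀ᵗ ∫₀^{t−s+x} d(s,v) dv ds for all (t,x) ∈ [0,T*] × [0,∞). Then d(t,x) = 0 for all (t,x) ∈ [0,T*] × [0,∞). -/
open MeasureTheory Set Filter Topology
open scoped Nat

/-! Iterating the integral inequality on the triangle `{t + x ≤ u}` gives
`d t x ≤ M (C u)ⁿ tⁿ / n!` for every `n`: each iteration integrates `sⁿ` in the outer variable
and costs at most a factor `u` in the inner one, whose range `[0, t - s + x]` stays inside the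
triangle. Letting `n → ∞` forces `d t x ≤ 0`. -/

namespace intervalIntegral

theorem integral_mono_on_of_nonneg {f g : ℝ → ℝ} {a b : ℝ} (hab : a ≤ b)
    (hf : ∀ x ∈ Icc a b, 0 ≤ f x) (hg : IntervalIntegrable g volume a b)
    (h : ∀ x ∈ Icc a b, f x ≤ g x) : ∫ x in a..b, f x ≤ ∫ x in a..b, g x := by
  rw [integral_of_le hab, integral_of_le hab]
  refine MeasureTheory.integral_mono_of_nonneg ?_ hg.1 ?_ <;>
    filter_upwards [ae_restrict_mem measurableSet_Ioc] with x hx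
  exacts [hf x (Ioc_subset_Icc_self hx), h x (Ioc_subset_Icc_self hx)]

theorem integral_le_mul_sub_of_le_const {f : ℝ → ℝ} {a b K : ℝ} (hab : a ≤ b)
    (hf : ∀ x ∈ Icc a b, 0 ≤ f x) (hK : ∀ x ∈ Icc a b, f x ≤ K) :
    ∫ x in a..b, f x ≤ K * (b - a) :=
  calc ∫ x in a..b, f x ≤ ‖∫ x in a..b, f x‖ := le_abs_self _
    _ ≤ K * |b - a| := norm_integral_le_of_norm_le_const fun x hx => by
        have hx' : x ∈ Icc a b := Ioc_subset_Icc_self (uIoc_of_le hab ▸ hx)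
        rw [Real.norm_of_nonneg (hf x hx')]
        exact hK x hx'
    _ = K * (b - a) := by rw [abs_of_nonneg (sub_nonneg.2 hab)]

end intervalIntegral

theorem le_zero_of_forall_le_mul_pow_div_factorial {y M a : ℝ}
    (h : ∀ n : ℕ, y ≤ M * (a ^ n / n !)) : y ≤ 0 := by
  have hlim : Tendsto (fun n : ℕ => M * (a ^ n / n !)) atTop (𝓝 0) := by
    simpa using (FloorSemiring.tendsto_pow_div_factorial_atTop a).const_mul M
  exact ge_of_tendsto hlim (Eventually.of_forall h)

section Iteration

variable {d : ℝ → ℝ → ℝ} {T C u : ℝ}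

theorem le_mul_pow_succ_of_le_mul_pow (hC : 0 ≤ C)
    (hnonneg : ∀ t ∈ Icc 0 T, ∀ x ∈ Ici (0 : ℝ), 0 ≤ d t x)
    (hineq : ∀ t ∈ Icc 0 T, ∀ x ∈ Ici (0 : ℝ),
      d t x ≤ C * ∫ s in (0 : ℝ)..t, ∫ v in (0 : ℝ)..(t - s + x), d s v)
    {A : ℝ} (hA : 0 ≤ A) {n : ℕ}
    (hbound : ∀ t ∈ Icc 0 T, ∀ x ∈ Ici (0 : ℝ), t + x ≤ u → d t x ≤ A * t ^ n) :
    ∀ t ∈ Icc 0 T, ∀ x ∈ Ici (0 : ℝ), t + x ≤ u →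
      d t x ≤ C * A * u / (n + 1) * t ^ (n + 1) := by
  intro t ht x hx hu
  have hinner : ∀ s ∈ Icc 0 t, 0 ≤ ∫ v in (0 : ℝ)..(t - s + x), d s v ∧
      ∫ v in (0 : ℝ)..(t - s + x), d s v ≤ A * u * s ^ n := by
    intro s hs
    have hsT : s ∈ Icc 0 T := ⟨hs.1, hs.2.trans ht.2⟩
    have hlen : 0 ≤ t - s + x := by linarith [hs.2, mem_Ici.1 hx]
    have hd0 : ∀ v ∈ Icc 0 (t - s + x), 0 ≤ d s v := fun v hv => hnonneg s hsT v hv.1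
    refine ⟨intervalIntegral.integral_nonneg hlen hd0, ?_⟩
    calc ∫ v in (0 : ℝ)..(t - s + x), d s v ≤ A * s ^ n * (t - s + x - 0) :=
          intervalIntegral.integral_le_mul_sub_of_le_const hlen hd0 fun v hv =>
            hbound s hsT v hv.1 (by linarith [hv.2])
      _ ≤ A * s ^ n * u := by
          have := hs.1
          exact mul_le_mul_of_nonneg_left (by linarith) (by positivity)
      _ = A * u * s ^ n := by ring
  calc d t x ≤ C * ∫ s in (0 : ℝ)..t, ∫ v in (0 : ℝ)..(t - s + x), d s v := hineq t ht x hx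
    _ ≤ C * ∫ s in (0 : ℝ)..t, A * u * s ^ n := by
        gcongr
        exact intervalIntegral.integral_mono_on_of_nonneg ht.1 (fun s hs => (hinner s hs).1)
          (Continuous.intervalIntegrable (by fun_prop) _ _) fun s hs => (hinner s hs).2
    _ = C * A * u / (n + 1) * t ^ (n + 1) := by
        rw [intervalIntegral.integral_const_mul, integral_pow]
        field_simp
        ring

theorem le_mul_pow_div_factorial_of_le (hC : 0 ≤ C)
    (hnonneg : ∀ t ∈ Icc 0 T, ∀ x ∈ Ici (0 : ℝ), 0 ≤ d t x)
    (hineq : ∀ t ∈ Icc 0 T, ∀ x ∈ Ici (0 : ℝ),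
      d t x ≤ C * ∫ s in (0 : ℝ)..t, ∫ v in (0 : ℝ)..(t - s + x), d s v)
    {M : ℝ} (hM : 0 ≤ M) (hdM : ∀ t ∈ Icc 0 T, ∀ x ∈ Ici (0 : ℝ), d t x ≤ M) (n : ℕ) :
    ∀ t ∈ Icc 0 T, ∀ x ∈ Ici (0 : ℝ), t + x ≤ u →
      d t x ≤ M * (C * u) ^ n / n ! * t ^ n := by
  induction n with
  | zero =>
    intro t ht x hx _
    simpa using hdM t ht x hx
  | succ n ih =>
    intro t ht x hx hu
    have hu0 : 0 ≤ u := by linarith [ht.1, mem_Ici.1 hx]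
    convert le_mul_pow_succ_of_le_mul_pow hC hnonneg hineq (by positivity) ih t ht x hx hu
      using 2
    rw [Nat.factorial_succ]
    push_cast
    field_simp
    ring

end Iteration

theorem gronwall_two_variables_general (T C : ℝ) (hC : 0 < C)
    (d : ℝ → ℝ → ℝ)
    (hnonneg : ∀ t ∈ Set.Icc 0 T, ∀ x ∈ Set.Ici (0 : ℝ), 0 ≤ d t x)
    (hbdd : ∃ M : ℝ, ∀ t ∈ Set.Icc 0 T, ∀ x ∈ Set.Ici (0 : ℝ), d t x ≤ M)
    (hineq : ∀ t ∈ Set.Icc 0 T, ∀ x ∈ Set.Ici (0 : ℝ),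
      d t x ≤ C * ∫ s in (0 : ℝ)..t, ∫ v in (0 : ℝ)..(t - s + x), d s v) :
    ∀ t ∈ Set.Icc 0 T, ∀ x ∈ Set.Ici (0 : ℝ), d t x = 0 := by
  obtain ⟨M, hM⟩ := hbdd
  have hdM : ∀ t ∈ Icc 0 T, ∀ x ∈ Ici (0 : ℝ), d t x ≤ max M 0 :=
    fun t ht x hx => (hM t ht x hx).trans (le_max_left _ _)
  intro t ht x hx
  refine le_antisymm (le_zero_of_forall_le_mul_pow_div_factorial (M := max M 0)
    (a := C * (t + x) * t) fun n => ?_) (hnonneg t ht x hx)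
  calc d t x ≤ max M 0 * (C * (t + x)) ^ n / n ! * t ^ n :=
        le_mul_pow_div_factorial_of_le hC.le hnonneg hineq (le_max_right _ _) hdM n t ht x hx le_rfl
    _ = max M 0 * ((C * (t + x) * t) ^ n / n !) := by rw [mul_pow (C * (t + x)) t]; ring

/-- A Gronwall-type lemma: a bounded nonnegative measurable function `d` on
`[0,T*] × [0,∞)` satisfying `d(t,x) ≤ C ∫₀ᵗ ∫₀^{t−s+x} d(s,v) dv ds` vanishes
identically. -/
theorem gronwall_two_variables (T C : ℝ) (hT : 0 < T) (hC : 0 < C)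
    (d : ℝ → ℝ → ℝ) (hmeas : Measurable (Function.uncurry d))
    (hnonneg : ∀ t ∈ Set.Icc 0 T, ∀ x ∈ Set.Ici (0 : ℝ), 0 ≤ d t x)
    (hbdd : ∃ M : ℝ, ∀ t ∈ Set.Icc 0 T, ∀ x ∈ Set.Ici (0 : ℝ), d t x ≤ M)
    (hineq : ∀ t ∈ Set.Icc 0 T, ∀ x ∈ Set.Ici (0 : ℝ),
      d t x ≤ C * ∫ s in (0 : ℝ)..t, ∫ v in (0 : ℝ)..(t - s + x), d s v) :
    ∀ t ∈ Set.Icc 0 T, ∀ x ∈ Set.Ici (0 : ℝ), d t x = 0 :=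
  gronwall_two_variables_general T C hC d hnonneg hbdd hineq
end

section
/- Let γ > 0 and T* > 0, let h ∈ L^{2,γ}, and let H : [0,T*] × [0,∞) → ℝ be jointly measurable with sup_{(t,x) ∈ [0,T*] × [0,∞)} |H(t,x)| < ∞ and such that for each x ≥ 0 the function t ↦ H(t,x) is càdlàg (right-continuous with left limits). Then the map h̃ : [0,T*] → L^{2,γ} defined by h̃(t) := ( x ↦ h(t+x) H(t,x) ) takes values in L^{2,γ} and is càdlàg in L^{2,γ}: it is right-continuous in the L^{2,γ}-norm at every t ∈ [0,T*), and has a left limit in the L^{2,γ}-norm at every t ∈ (0,T*]. -/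
/-!
The map `h ↦ φ := 1_{(0,∞)} h e^{γ·/2}` is an isometry of `L^{2,γ}` into `L²(ℝ)` under which
the shift `s ↦ h(s + ·)` becomes `s ↦ e^{-γs/2} φ(· + s)`, so it is continuous by continuity of
translation in `L²(ℝ)`. Writing
`h(s+x) H(s,x) - h(t+x) K(x) = (h(s+x) - h(t+x)) H(s,x) + h(t+x) (H(s,x) - K(x))`,
the first term is bounded by `sup |H|` times the shift, and the second tends to `0` by dominated
convergence, dominated by `4 M² h(t+x)² e^{γx}`. Taking `K = H(t, ·)` gives right continuity;
taking for `K` the pointwise left limit, which is again measurable and bounded by `M`, gives the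
left limits.
-/

open MeasureTheory Filter Set Topology

section BoundedMultiplier

variable {α : Type*} [MeasurableSpace α] {μ : Measure α} {g w : α → ℝ} {C : ℝ}

theorem integrable_mul_sq_of_abs_le {K : α → ℝ} (hint : Integrable (fun x => g x ^ 2 * w x) μ)
    (hKm : AEStronglyMeasurable K μ) (hKb : ∀ᵐ x ∂μ, |K x| ≤ C) :
    Integrable (fun x => (g x * K x) ^ 2 * w x) μ := by
  refine (hint.bdd_mul (c := C ^ 2) (hKm.pow 2) ?_).congr
    (ae_of_all _ fun x => by simp only [Pi.pow_apply]; ring)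
  filter_upwards [hKb] with x hx
  simpa [Real.norm_eq_abs, abs_pow, sq_abs] using sq_le_sq' (abs_le.1 hx).1 (abs_le.1 hx).2

theorem tendsto_integral_mul_sq_of_tendsto_zero {ι : Type*} {l : Filter ι} [l.IsCountablyGenerated]
    {F : ι → α → ℝ} (hint : Integrable (fun x => g x ^ 2 * w x) μ)
    (hFm : ∀ᶠ i in l, AEStronglyMeasurable (F i) μ) (hFb : ∀ᶠ i in l, ∀ᵐ x ∂μ, |F i x| ≤ C)
    (hF : ∀ᵐ x ∂μ, Tendsto (fun i => F i x) l (𝓝 0)) :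
    Tendsto (fun i => ∫ x, (g x * F i x) ^ 2 * w x ∂μ) l (𝓝 0) := by
  have hlim := tendsto_integral_filter_of_dominated_convergence (l := l)
    (F := fun i x => (g x * F i x) ^ 2 * w x) (f := 0) (fun x => C ^ 2 * ‖g x ^ 2 * w x‖)
    ?_ ?_ (hint.norm.const_mul _) (hF.mono fun x hx => ?_)
  · simpa using hlim
  · filter_upwards [hFm] with i hi
    exact ((hi.pow 2).mul hint.aestronglyMeasurable).congr
      (ae_of_all _ fun x => by simp only [Pi.pow_apply, Pi.mul_apply]; ring)
  · filter_upwards [hFb] with i hi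
    filter_upwards [hi] with x hx
    rw [show (g x * F i x) ^ 2 * w x = F i x ^ 2 * (g x ^ 2 * w x) by ring, norm_mul,
      Real.norm_of_nonneg (sq_nonneg _)]
    exact mul_le_mul_of_nonneg_right (sq_le_sq' (abs_le.1 hx).1 (abs_le.1 hx).2) (norm_nonneg _)
  · simpa using ((hx.const_mul (g x)).pow 2).mul_const (w x)

end BoundedMultiplier

theorem MeasureTheory.L2.integral_sq_eq_norm_sq {α : Type*} [MeasurableSpace α] {μ : Measure α}
    (f : Lp ℝ 2 μ) : ∫ x, f x ^ 2 ∂μ = ‖f‖ ^ 2 := by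
  rw [← real_inner_self_eq_norm_sq f, L2.inner_def]
  simp [pow_two]

section Translation

variable {γ : ℝ} {h : ℝ → ℝ}

noncomputable def weightedExtension (γ : ℝ) (h : ℝ → ℝ) : ℝ → ℝ :=
  (Ioi 0).indicator fun y => h y * Real.exp (γ * y / 2)

theorem mul_exp_half_sq (a b : ℝ) : (a * Real.exp (b / 2)) ^ 2 = a ^ 2 * Real.exp b := by
  rw [mul_pow, ← Real.exp_nat_mul]
  congr 2
  push_cast
  ring

theorem memLp_weightedExtension (hmeas : Measurable h)
    (hL2 : IntegrableOn (fun x => h x ^ 2 * Real.exp (γ * x)) (Ioi 0)) :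
    MemLp (weightedExtension γ h) 2 volume := by
  have hm : Measurable (weightedExtension γ h) :=
    (hmeas.mul (by fun_prop)).indicator measurableSet_Ioi
  refine (memLp_two_iff_integrable_sq hm.aestronglyMeasurable).2 ?_
  refine ((integrable_indicator_iff measurableSet_Ioi).2 hL2).congr (ae_of_all _ fun y => ?_)
  by_cases hy : y ∈ Ioi (0 : ℝ)
  · simp [weightedExtension, hy, mul_exp_half_sq]
  · simp [weightedExtension, hy]

/-- Translation by `s` in `L^{2,γ}`, transported to `L²(ℝ)` by `weightedExtension`. -/
noncomputable def weightedTranslate (γ : ℝ) (φ : Lp ℝ 2 (volume : Measure ℝ)) (s : ℝ) :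
    Lp ℝ 2 (volume : Measure ℝ) :=
  Real.exp (-(γ * s) / 2) •
    Lp.compMeasurePreserving (· + s) (measurePreserving_add_right volume s) φ

theorem continuous_weightedTranslate (γ : ℝ) (φ : Lp ℝ 2 (volume : Measure ℝ)) :
    Continuous (weightedTranslate γ φ) := by
  refine Continuous.smul (f := fun s => Real.exp (-(γ * s) / 2)) (by fun_prop) ?_
  exact Continuous.compMeasurePreservingLp (f := fun _ : ℝ => φ)
    (g := fun s => (⟨(· + s), by fun_prop⟩ : C(ℝ, ℝ))) continuous_const
    (ContinuousMap.continuous_of_continuous_uncurry _ (continuous_snd.add continuous_fst))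
    (fun s => measurePreserving_add_right volume s) (by norm_num)

theorem weightedTranslate_ae_eq (hφ : MemLp (weightedExtension γ h) 2 volume) {s : ℝ}
    (hs : 0 ≤ s) :
    weightedTranslate γ (hφ.toLp _) s =ᵐ[volume.restrict (Ioi 0)]
      fun x => h (s + x) * Real.exp (γ * x / 2) := by
  have hp := measurePreserving_add_right (volume : Measure ℝ) s
  have hcomp : Lp.compMeasurePreserving (· + s) hp (hφ.toLp _) =ᵐ[volume]
      weightedExtension γ h ∘ (· + s) := by
    rw [Lp.toLp_compMeasurePreserving hφ hp]
    exact (hφ.comp_measurePreserving hp).coeFn_toLp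
  refine EventuallyEq.trans (ae_restrict_of_ae ((Lp.coeFn_smul (Real.exp (-(γ * s) / 2)) _).trans
    (hcomp.const_smul _))) ?_
  refine (ae_restrict_iff' measurableSet_Ioi).2 (ae_of_all _ fun x (hx : 0 < x) => ?_)
  have hxs : x + s ∈ Ioi 0 := show 0 < x + s by linarith
  simp only [Pi.smul_apply, Function.comp_apply, weightedExtension, indicator_of_mem hxs,
    smul_eq_mul]
  rw [mul_left_comm, ← Real.exp_add, add_comm x s]
  congr 2
  ring

theorem sq_weightedTranslate_sub_ae_eq (hφ : MemLp (weightedExtension γ h) 2 volume) {s t : ℝ}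
    (hs : 0 ≤ s) (ht : 0 ≤ t) :
    (fun x => ((weightedTranslate γ (hφ.toLp _) s - weightedTranslate γ (hφ.toLp _) t) x) ^ 2)
      =ᵐ[volume.restrict (Ioi 0)] fun x => (h (s + x) - h (t + x)) ^ 2 * Real.exp (γ * x) := by
  filter_upwards [ae_restrict_of_ae (Lp.coeFn_sub (weightedTranslate γ (hφ.toLp _) s)
    (weightedTranslate γ (hφ.toLp _) t)), weightedTranslate_ae_eq hφ hs,
    weightedTranslate_ae_eq hφ ht] with x hsub hus hut
  rw [hsub, Pi.sub_apply, hus, hut, ← sub_mul, mul_exp_half_sq]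

theorem integrableOn_sq_shift (hmeas : Measurable h)
    (hL2 : IntegrableOn (fun x => h x ^ 2 * Real.exp (γ * x)) (Ioi 0)) {s : ℝ} (hs : 0 ≤ s) :
    IntegrableOn (fun x => h (s + x) ^ 2 * Real.exp (γ * x)) (Ioi 0) := by
  have hφ := memLp_weightedExtension hmeas hL2
  refine (Lp.memLp (weightedTranslate γ (hφ.toLp _) s)).integrable_sq.integrableOn.congr ?_
  filter_upwards [weightedTranslate_ae_eq hφ hs] with x hx
  rw [hx, mul_exp_half_sq]

theorem integrableOn_sq_shift_sub (hmeas : Measurable h)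
    (hL2 : IntegrableOn (fun x => h x ^ 2 * Real.exp (γ * x)) (Ioi 0)) {s t : ℝ} (hs : 0 ≤ s)
    (ht : 0 ≤ t) :
    IntegrableOn (fun x => (h (s + x) - h (t + x)) ^ 2 * Real.exp (γ * x)) (Ioi 0) := by
  have hφ := memLp_weightedExtension hmeas hL2
  exact (Lp.memLp _).integrable_sq.integrableOn.congr (sq_weightedTranslate_sub_ae_eq hφ hs ht)

theorem tendsto_integral_sq_shift_sub (hmeas : Measurable h)
    (hL2 : IntegrableOn (fun x => h x ^ 2 * Real.exp (γ * x)) (Ioi 0)) {t : ℝ} (ht : 0 ≤ t) :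
    Tendsto (fun s => ∫ x in Ioi 0, (h (s + x) - h (t + x)) ^ 2 * Real.exp (γ * x))
      (𝓝[Ici 0] t) (𝓝 0) := by
  have hφ := memLp_weightedExtension hmeas hL2
  set u := weightedTranslate γ (hφ.toLp _)
  have hu : Tendsto (fun s => ‖u s - u t‖ ^ 2) (𝓝[Ici 0] t) (𝓝 0) := by
    simpa using ((tendsto_iff_norm_sub_tendsto_zero.1
      ((continuous_weightedTranslate γ _).tendsto t)).pow 2).mono_left nhdsWithin_le_nhds
  refine squeeze_zero' (Eventually.of_forall fun s =>
    setIntegral_nonneg measurableSet_Ioi fun x _ => by positivity) ?_ hu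
  filter_upwards [self_mem_nhdsWithin] with s (hs : 0 ≤ s)
  calc ∫ x in Ioi 0, (h (s + x) - h (t + x)) ^ 2 * Real.exp (γ * x)
      = ∫ x in Ioi 0, (u s - u t) x ^ 2 :=
        integral_congr_ae (sq_weightedTranslate_sub_ae_eq hφ hs ht).symm
    _ ≤ ∫ x, (u s - u t) x ^ 2 :=
        setIntegral_le_integral (Lp.memLp _).integrable_sq (ae_of_all _ fun x => sq_nonneg _)
    _ = ‖u s - u t‖ ^ 2 := L2.integral_sq_eq_norm_sq _

end Translation

theorem sq_mul_sub_mul_le {a b c k M : ℝ} (hb : |b| ≤ M) :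
    (a * b - c * k) ^ 2 ≤ 2 * M ^ 2 * (a - c) ^ 2 + 2 * (c * (b - k)) ^ 2 := by
  have hbM : b ^ 2 ≤ M ^ 2 := sq_le_sq' (abs_le.1 hb).1 (abs_le.1 hb).2
  nlinarith [sq_nonneg ((a - c) * b - c * (b - k)),
    mul_le_mul_of_nonneg_left hbM (sq_nonneg (a - c))]

section ShiftedProducts

variable {γ : ℝ} {h : ℝ → ℝ}

theorem integral_sq_shift_mul_sub_le (hmeas : Measurable h)
    (hL2 : IntegrableOn (fun x => h x ^ 2 * Real.exp (γ * x)) (Ioi 0)) {s t M : ℝ}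
    (hs : 0 ≤ s) (ht : 0 ≤ t) {b k : ℝ → ℝ}
    (hbm : AEStronglyMeasurable b (volume.restrict (Ioi 0)))
    (hkm : AEStronglyMeasurable k (volume.restrict (Ioi 0)))
    (hb : ∀ x ∈ Ioi (0 : ℝ), |b x| ≤ M) (hk : ∀ x ∈ Ioi (0 : ℝ), |k x| ≤ M) :
    ∫ x in Ioi 0, (h (s + x) * b x - h (t + x) * k x) ^ 2 * Real.exp (γ * x) ≤
      2 * M ^ 2 * (∫ x in Ioi 0, (h (s + x) - h (t + x)) ^ 2 * Real.exp (γ * x)) +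
        2 * ∫ x in Ioi 0, (h (t + x) * (b x - k x)) ^ 2 * Real.exp (γ * x) := by
  have hA := (integrableOn_sq_shift_sub hmeas hL2 hs ht).const_mul (2 * M ^ 2)
  have hB := (integrable_mul_sq_of_abs_le (C := 2 * M) (K := fun x => b x - k x)
    (integrableOn_sq_shift hmeas hL2 ht)
    (hbm.sub hkm) (ae_restrict_of_forall_mem measurableSet_Ioi fun x hx =>
      (abs_sub _ _).trans (by linarith [hb x hx, hk x hx]))).const_mul 2
  have hmono := integral_mono_of_nonneg (ae_of_all _ fun x => by positivity) (hA.fun_add hB)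
    (ae_restrict_of_forall_mem measurableSet_Ioi fun x hx =>
      (mul_le_mul_of_nonneg_right (sq_mul_sub_mul_le (a := h (s + x)) (c := h (t + x))
        (k := k x) (hb x hx)) (Real.exp_nonneg (γ * x))).trans_eq (by ring))
  rwa [integral_add hA hB, integral_const_mul, integral_const_mul] at hmono

theorem tendsto_integral_sq_shift_mul_sub (hmeas : Measurable h)
    (hL2 : IntegrableOn (fun x => h x ^ 2 * Real.exp (γ * x)) (Ioi 0)) {t M : ℝ} (ht : 0 ≤ t)
    {l : Filter ℝ} [l.IsCountablyGenerated] (hl : l ≤ 𝓝[Ici 0] t) {H : ℝ → ℝ → ℝ} {K : ℝ → ℝ}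
    (hHm : ∀ s, Measurable (H s)) (hHb : ∀ᶠ s in l, ∀ x ∈ Ioi (0 : ℝ), |H s x| ≤ M)
    (hKm : AEStronglyMeasurable K (volume.restrict (Ioi 0))) (hKb : ∀ x ∈ Ioi (0 : ℝ), |K x| ≤ M)
    (hK : ∀ x ∈ Ioi (0 : ℝ), Tendsto (fun s => H s x) l (𝓝 (K x))) :
    Tendsto (fun s => ∫ x in Ioi 0, (h (s + x) * H s x - h (t + x) * K x) ^ 2 * Real.exp (γ * x))
      l (𝓝 0) := by
  have hA := (tendsto_integral_sq_shift_sub (γ := γ) hmeas hL2 ht).mono_left hl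
  have hB : Tendsto (fun s => ∫ x in Ioi 0, (h (t + x) * (H s x - K x)) ^ 2 * Real.exp (γ * x))
      l (𝓝 0) :=
    tendsto_integral_mul_sq_of_tendsto_zero (C := 2 * M) (integrableOn_sq_shift hmeas hL2 ht)
      (Eventually.of_forall fun s => (hHm s).aestronglyMeasurable.sub hKm)
      (hHb.mono fun s hs => ae_restrict_of_forall_mem measurableSet_Ioi fun x hx =>
        (abs_sub _ _).trans (by linarith [hs x hx, hKb x hx]))
      (ae_restrict_of_forall_mem measurableSet_Ioi fun x hx => by
        simpa using (hK x hx).sub_const (K x))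
  refine squeeze_zero' (Eventually.of_forall fun s =>
    setIntegral_nonneg measurableSet_Ioi fun x _ => by positivity) ?_
    (by simpa using (hA.const_mul (2 * M ^ 2)).add (hB.const_mul 2))
  filter_upwards [hHb, hl self_mem_nhdsWithin] with s hs (hs0 : 0 ≤ s)
  exact integral_sq_shift_mul_sub_le hmeas hL2 hs0 ht (hHm s).aestronglyMeasurable hKm hs hKb

theorem exists_tendsto_integral_sq_shift_mul_sub (hmeas : Measurable h)
    (hL2 : IntegrableOn (fun x => h x ^ 2 * Real.exp (γ * x)) (Ioi 0)) {t M : ℝ} (ht : 0 ≤ t)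
    {l : Filter ℝ} [l.NeBot] [l.IsCountablyGenerated] (hl : l ≤ 𝓝[Ici 0] t) {H : ℝ → ℝ → ℝ}
    (hHm : ∀ s, Measurable (H s)) (hHb : ∀ᶠ s in l, ∀ x ∈ Ioi (0 : ℝ), |H s x| ≤ M)
    (hlim : ∀ x ∈ Ioi (0 : ℝ), ∃ L, Tendsto (fun s => H s x) l (𝓝 L)) :
    ∃ g : ℝ → ℝ, IntegrableOn (fun x => g x ^ 2 * Real.exp (γ * x)) (Ioi 0) ∧
      Tendsto (fun s => ∫ x in Ioi 0, (h (s + x) * H s x - g x) ^ 2 * Real.exp (γ * x))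
        l (𝓝 0) := by
  choose! K hK using hlim
  have hKm : AEStronglyMeasurable K (volume.restrict (Ioi 0)) :=
    aestronglyMeasurable_of_tendsto_ae l (fun s => (hHm s).aestronglyMeasurable)
      (ae_restrict_of_forall_mem measurableSet_Ioi hK)
  have hKb : ∀ x ∈ Ioi (0 : ℝ), |K x| ≤ M :=
    fun x hx => le_of_tendsto (hK x hx).abs (hHb.mono fun s hs => hs x hx)
  exact ⟨fun x => h (t + x) * K x,
    integrable_mul_sq_of_abs_le (integrableOn_sq_shift hmeas hL2 ht) hKm
      (ae_restrict_of_forall_mem measurableSet_Ioi hKb),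
    tendsto_integral_sq_shift_mul_sub hmeas hL2 ht hl hHm hHb hKm hKb hK⟩

end ShiftedProducts

theorem cadlag_in_L2gamma_general (γ T : ℝ)
    (h : ℝ → ℝ) (hmeas : Measurable h)
    (hL2 : IntegrableOn (fun x => h x ^ 2 * Real.exp (γ * x)) (Set.Ioi 0))
    (H : ℝ → ℝ → ℝ) (hHmeas : Measurable (Function.uncurry H))
    (hHbdd : ∃ M : ℝ, ∀ t ∈ Set.Icc 0 T, ∀ x ∈ Set.Ici (0 : ℝ), |H t x| ≤ M)
    (hright : ∀ x ∈ Set.Ici (0 : ℝ), ∀ t ∈ Set.Ico 0 T,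
      Filter.Tendsto (fun s => H s x) (nhdsWithin t (Set.Ici t)) (nhds (H t x)))
    (hleft : ∀ x ∈ Set.Ici (0 : ℝ), ∀ t ∈ Set.Ioc 0 T,
      ∃ L : ℝ, Filter.Tendsto (fun s => H s x) (nhdsWithin t (Set.Iio t)) (nhds L)) :
    (∀ t ∈ Set.Icc 0 T,
        IntegrableOn (fun x => (h (t + x) * H t x) ^ 2 * Real.exp (γ * x)) (Set.Ioi 0)) ∧
    (∀ t ∈ Set.Ico 0 T,
        Filter.Tendsto (fun s => Real.sqrt (∫ x in Set.Ioi (0 : ℝ),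
            (h (s + x) * H s x - h (t + x) * H t x) ^ 2 * Real.exp (γ * x)))
          (nhdsWithin t (Set.Ioc t T)) (nhds 0)) ∧
    (∀ t ∈ Set.Ioc 0 T, ∃ g : ℝ → ℝ,
        IntegrableOn (fun x => g x ^ 2 * Real.exp (γ * x)) (Set.Ioi 0) ∧
        Filter.Tendsto (fun s => Real.sqrt (∫ x in Set.Ioi (0 : ℝ),
            (h (s + x) * H s x - g x) ^ 2 * Real.exp (γ * x)))
          (nhdsWithin t (Set.Ico 0 t)) (nhds 0)) := by
  obtain ⟨M, hM⟩ := hHbdd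
  have hHm : ∀ s, Measurable (H s) := fun s => hHmeas.comp measurable_prodMk_left
  have hHb : ∀ S ⊆ Icc 0 T, ∀ t, ∀ᶠ s in 𝓝[S] t, ∀ x ∈ Ioi (0 : ℝ), |H s x| ≤ M :=
    fun S hS t => eventually_nhdsWithin_of_forall fun s hs x hx =>
      hM s (hS hs) x (Ioi_subset_Ici_self hx)
  have hsqrt : Tendsto Real.sqrt (𝓝 0) (𝓝 0) := by
    simpa using Real.continuous_sqrt.tendsto 0
  refine ⟨fun t ht => ?_, fun t ht => ?_, fun t ht => ?_⟩
  · exact integrable_mul_sq_of_abs_le (integrableOn_sq_shift hmeas hL2 ht.1)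
      (hHm t).aestronglyMeasurable (ae_restrict_of_forall_mem measurableSet_Ioi fun x hx =>
        hM t ht x (Ioi_subset_Ici_self hx))
  · refine hsqrt.comp (tendsto_integral_sq_shift_mul_sub hmeas hL2 ht.1
      (nhdsWithin_mono _ fun s hs => ht.1.trans hs.1.le) hHm
      (hHb _ (fun s hs => ⟨ht.1.trans hs.1.le, hs.2⟩) t) (hHm t).aestronglyMeasurable
      (fun x hx => hM t (Ico_subset_Icc_self ht) x (Ioi_subset_Ici_self hx)) fun x hx => ?_)
    exact (hright x (Ioi_subset_Ici_self hx) t ht).mono_left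
      (nhdsWithin_mono _ (Ioc_subset_Ioi_self.trans Ioi_subset_Ici_self))
  · have := right_nhdsWithin_Ico_neBot ht.1
    obtain ⟨g, hg, hlim⟩ := exists_tendsto_integral_sq_shift_mul_sub hmeas hL2 ht.1.le
      (nhdsWithin_mono _ Ico_subset_Ici_self) hHm
      (hHb _ (fun s hs => ⟨hs.1, hs.2.le.trans ht.2⟩) t) fun x hx =>
        (hleft x (Ioi_subset_Ici_self hx) t ht).imp fun _ hL =>
          hL.mono_left (nhdsWithin_mono _ Ico_subset_Iio_self)
    exact ⟨g, hg, hsqrt.comp hlim⟩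

/-- If `h ∈ L^{2,γ}` and `H(t,x)` is jointly measurable, bounded on
`[0,T*] × [0,∞)` and càdlàg in `t` for each `x ≥ 0`, then
`h̃(t) = (x ↦ h(t+x) H(t,x))` takes values in `L^{2,γ}` and is càdlàg in the
`L^{2,γ}`-norm: right-continuous at every `t ∈ [0,T*)` and with a left limit at
every `t ∈ (0,T*]`. -/
theorem cadlag_in_L2gamma (γ T : ℝ) (hγ : 0 < γ) (hT : 0 < T)
    (h : ℝ → ℝ) (hmeas : Measurable h)
    (hL2 : IntegrableOn (fun x => h x ^ 2 * Real.exp (γ * x)) (Set.Ioi 0))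
    (H : ℝ → ℝ → ℝ) (hHmeas : Measurable (Function.uncurry H))
    (hHbdd : ∃ M : ℝ, ∀ t ∈ Set.Icc 0 T, ∀ x ∈ Set.Ici (0 : ℝ), |H t x| ≤ M)
    (hright : ∀ x ∈ Set.Ici (0 : ℝ), ∀ t ∈ Set.Ico 0 T,
      Filter.Tendsto (fun s => H s x) (nhdsWithin t (Set.Ici t)) (nhds (H t x)))
    (hleft : ∀ x ∈ Set.Ici (0 : ℝ), ∀ t ∈ Set.Ioc 0 T,
      ∃ L : ℝ, Filter.Tendsto (fun s => H s x) (nhdsWithin t (Set.Iio t)) (nhds L)) :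
    (∀ t ∈ Set.Icc 0 T,
        IntegrableOn (fun x => (h (t + x) * H t x) ^ 2 * Real.exp (γ * x)) (Set.Ioi 0)) ∧
    (∀ t ∈ Set.Ico 0 T,
        Filter.Tendsto (fun s => Real.sqrt (∫ x in Set.Ioi (0 : ℝ),
            (h (s + x) * H s x - h (t + x) * H t x) ^ 2 * Real.exp (γ * x)))
          (nhdsWithin t (Set.Ioc t T)) (nhds 0)) ∧
    (∀ t ∈ Set.Ioc 0 T, ∃ g : ℝ → ℝ,
        IntegrableOn (fun x => g x ^ 2 * Real.exp (γ * x)) (Set.Ioi 0) ∧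
        Filter.Tendsto (fun s => Real.sqrt (∫ x in Set.Ioi (0 : ℝ),
            (h (s + x) * H s x - g x) ^ 2 * Real.exp (γ * x)))
          (nhdsWithin t (Set.Ico 0 t)) (nhds 0)) :=
  cadlag_in_L2gamma_general γ T h hmeas hL2 H hHmeas hHbdd hright hleft
end

section
/- Let γ > 0, T* > 0 and λ̄ > 0, let λ : [0,∞) → ℝ be measurable with 0 < λ(x) ≤ λ̄ for all x ≥ 0, let J′ : [0,∞) → ℝ be nondecreasing and satisfy limsup_{z→∞} ( ln z − λ̄ T* J′(z) ) = +∞, let b : [0,T*] × [0,∞) → (0,∞) be measurable and bounded, and let r₀ ∈ L^{2,γ} be nonnegative. Then there exists a constant c₁ > 0 with the following property: for every jointly measurable h : [0,T*] × [0,∞) → [0,∞) satisfying ∫₀^∞ h(t,x)² e^{γx} dx ≤ c₁² for all t ∈ [0,T*], the function (𝒦h)(t,x) := r₀(t+x) · b(t,x) · exp( ∫₀ᵗ J′( ∫₀^{t−s+x} λ(v) h(s,v) dv ) λ(t−s+x) ds ) satisfies ∫₀^∞ (𝒦h)(t,x)² e^{γx} dx ≤ c₁² for all t ∈ [0,T*].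 -/
/-!
For `h` in the ball of radius `c₁`, Cauchy–Schwarz against the weight `e^{-γx}` bounds every
inner integral `∫₀^w λ h(s,·)` by `z := λ̄ c₁ / √γ`, so by monotonicity of `J′` the exponent in
`𝒦h` is at most `λ̄ T max(J′(z), 0)`. Since translating by `t ≥ 0` does not increase the
`L^{2,γ}` norm, `‖(𝒦h)(t)‖ ≤ B e^{λ̄ T max(J′(z), 0)} ‖r₀‖`. The limsup condition says that
`ln z − λ̄ T J′(z)` is unbounded, which is exactly what makes this at most `c₁` for some `c₁`.
-/

open MeasureTheory Set
open scoped ENNReal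

/-- `‖f‖²_{L^{2,γ}}`. -/
noncomputable def expWeightedSqNorm (γ : ℝ) (f : ℝ → ℝ) : ℝ≥0∞ :=
  ∫⁻ x in Ioi 0, ENNReal.ofReal (f x ^ 2 * Real.exp (γ * x))

lemma lintegral_ofReal_exp_neg_mul_Ioi {γ : ℝ} (hγ : 0 < γ) :
    ∫⁻ x in Ioi (0 : ℝ), ENNReal.ofReal (Real.exp (-γ * x)) = ENNReal.ofReal γ⁻¹ := by
  rw [← ofReal_integral_eq_lintegral_ofReal (integrableOn_exp_mul_Ioi (neg_neg_iff_pos.2 hγ) 0)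
    (Filter.Eventually.of_forall fun x => (Real.exp_pos _).le), integral_exp_mul_Ioi (by linarith)]
  simp [neg_div]

/-- Cauchy–Schwarz against the weight `e^{-γx}`, whose integral over `(0, ∞)` is `1/γ`. -/
lemma lintegral_enorm_le_of_expWeightedSqNorm_le {γ c : ℝ} {f : ℝ → ℝ} (hγ : 0 < γ)
    (hf : Measurable f) (hc : 0 ≤ c) (hfc : expWeightedSqNorm γ f ≤ ENNReal.ofReal (c ^ 2)) :
    ∫⁻ x in Ioi 0, ‖f x‖ₑ ≤ ENNReal.ofReal (c / √γ) := by
  set F : ℝ → ℝ≥0∞ := fun x => ENNReal.ofReal (|f x| * Real.exp (γ * x / 2))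
  set G : ℝ → ℝ≥0∞ := fun x => ENNReal.ofReal (Real.exp (-γ * x / 2))
  have hFG : ∀ x, ‖f x‖ₑ = (F * G) x := fun x => by
    rw [Pi.mul_apply, ← ENNReal.ofReal_mul (by positivity), mul_assoc, ← Real.exp_add,
      Real.enorm_eq_ofReal_abs]
    ring_nf; simp
  have hF : ∀ x, F x ^ (2 : ℝ) = ENNReal.ofReal (f x ^ 2 * Real.exp (γ * x)) := fun x => by
    rw [ENNReal.rpow_two, ← ENNReal.ofReal_pow (by positivity), mul_pow, sq_abs, ← Real.exp_nat_mul]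
    ring_nf
  have hG : ∀ x, G x ^ (2 : ℝ) = ENNReal.ofReal (Real.exp (-γ * x)) := fun x => by
    rw [ENNReal.rpow_two, ← ENNReal.ofReal_pow (by positivity), ← Real.exp_nat_mul]
    ring_nf
  calc ∫⁻ x in Ioi 0, ‖f x‖ₑ = ∫⁻ x in Ioi 0, (F * G) x := by simp_rw [hFG]
    _ ≤ (∫⁻ x in Ioi 0, F x ^ (2 : ℝ)) ^ (1 / 2 : ℝ) * (∫⁻ x in Ioi 0, G x ^ (2 : ℝ)) ^ (1 / 2 : ℝ) :=
        ENNReal.lintegral_mul_le_Lp_mul_Lq _ Real.HolderConjugate.two_two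
          (by fun_prop) (by fun_prop)
    _ ≤ ENNReal.ofReal (c ^ 2) ^ (1 / 2 : ℝ) * ENNReal.ofReal γ⁻¹ ^ (1 / 2 : ℝ) := by
        simp_rw [hF, hG, lintegral_ofReal_exp_neg_mul_Ioi hγ]
        gcongr
        exact hfc
    _ = ENNReal.ofReal (c / √γ) := by
        rw [← ENNReal.mul_rpow_of_nonneg _ _ (by norm_num), ← ENNReal.ofReal_mul (by positivity),
          ENNReal.ofReal_rpow_of_nonneg (by positivity) (by norm_num), ← Real.sqrt_eq_rpow,
          Real.sqrt_mul (by positivity), Real.sqrt_sq hc, Real.sqrt_inv, div_eq_mul_inv]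

lemma abs_intervalIntegral_mul_le {γ c lb w : ℝ} {lam g : ℝ → ℝ} (hγ : 0 < γ)
    (hlam : ∀ v, 0 ≤ v → |lam v| ≤ lb) (hg : Measurable g) (hc : 0 ≤ c)
    (hgc : expWeightedSqNorm γ g ≤ ENNReal.ofReal (c ^ 2)) (hw : 0 ≤ w) :
    |∫ v in (0 : ℝ)..w, lam v * g v| ≤ lb / √γ * c := by
  have hlb : 0 ≤ lb := (abs_nonneg _).trans (hlam 0 le_rfl)
  rw [intervalIntegral.integral_of_le hw]
  refine ((Real.norm_eq_abs _).ge.trans (norm_integral_le_lintegral_norm _)).trans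
    (ENNReal.toReal_le_of_le_ofReal (by positivity) ?_)
  calc ∫⁻ v in Ioc 0 w, ENNReal.ofReal ‖lam v * g v‖
      ≤ ∫⁻ v in Ioc 0 w, ENNReal.ofReal lb * ‖g v‖ₑ := by
        refine setLIntegral_mono' measurableSet_Ioc fun v hv => ?_
        rw [ofReal_norm, enorm_mul, Real.enorm_eq_ofReal_abs (lam v)]
        gcongr
        exact hlam v hv.1.le
    _ ≤ ENNReal.ofReal lb * ∫⁻ v in Ioi 0, ‖g v‖ₑ := by
        rw [lintegral_const_mul' _ _ ENNReal.ofReal_ne_top]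
        exact mul_le_mul_right (lintegral_mono_set Ioc_subset_Ioi_self) _
    _ ≤ ENNReal.ofReal (lb / √γ * c) := by
        rw [show lb / √γ * c = lb * (c / √γ) by ring, ENNReal.ofReal_mul hlb]
        gcongr
        exact lintegral_enorm_le_of_expWeightedSqNorm_le hγ hg hc hgc

lemma expWeightedSqNorm_mul_le {γ M : ℝ} {f g : ℝ → ℝ} (hg : ∀ x ∈ Ioi 0, |g x| ≤ M) :
    expWeightedSqNorm γ (fun x => f x * g x) ≤ ENNReal.ofReal (M ^ 2) * expWeightedSqNorm γ f := by
  rw [expWeightedSqNorm, expWeightedSqNorm, ← lintegral_const_mul' _ _ ENNReal.ofReal_ne_top]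
  refine setLIntegral_mono' measurableSet_Ioi fun x hx => ?_
  rw [← ENNReal.ofReal_mul (sq_nonneg _)]
  apply ENNReal.ofReal_le_ofReal
  have hg2 : g x ^ 2 ≤ M ^ 2 := by
    rw [← sq_abs]; exact pow_le_pow_left₀ (abs_nonneg _) (hg x hx) 2
  calc (f x * g x) ^ 2 * Real.exp (γ * x) = g x ^ 2 * (f x ^ 2 * Real.exp (γ * x)) := by ring
    _ ≤ M ^ 2 * (f x ^ 2 * Real.exp (γ * x)) := by gcongr

lemma expWeightedSqNorm_comp_add_le {γ t : ℝ} {f : ℝ → ℝ} (hγ : 0 ≤ γ) (ht : 0 ≤ t) :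
    expWeightedSqNorm γ (fun x => f (t + x)) ≤ expWeightedSqNorm γ f := by
  set F : ℝ → ℝ≥0∞ := fun y => ENNReal.ofReal (f y ^ 2 * Real.exp (γ * y))
  have hshift : ∫⁻ x in Ioi 0, F (t + x) = ∫⁻ y in Ioi t, F y := by
    have := (measurePreserving_add_left volume t).setLIntegral_comp_preimage_emb
      (measurableEmbedding_addLeft t) F (Ioi t)
    rwa [show (t + ·) ⁻¹' Ioi t = Ioi 0 by ext; simp] at this
  calc expWeightedSqNorm γ (fun x => f (t + x)) ≤ ∫⁻ x in Ioi 0, F (t + x) := by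
        refine setLIntegral_mono' measurableSet_Ioi fun x _ => ?_
        apply ENNReal.ofReal_le_ofReal
        gcongr
        linarith
    _ = ∫⁻ y in Ioi t, F y := hshift
    _ ≤ expWeightedSqNorm γ f := lintegral_mono_set (Ioi_subset_Ioi ht)

lemma intervalIntegral_le_mul_of_le {f : ℝ → ℝ} {t K : ℝ} (ht : 0 ≤ t) (hK : 0 ≤ K)
    (hf : ∀ s ∈ Icc 0 t, f s ≤ K) : ∫ s in (0 : ℝ)..t, f s ≤ K * t := by
  by_cases hfi : IntervalIntegrable f volume 0 t
  · calc ∫ s in (0 : ℝ)..t, f s ≤ ∫ _ in (0 : ℝ)..t, K :=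
          intervalIntegral.integral_mono_on ht hfi intervalIntegrable_const hf
      _ = K * t := by simp [mul_comm]
  · rw [intervalIntegral.integral_undef hfi]
    positivity

lemma intervalIntegral_mul_le_of_le {φ ψ : ℝ → ℝ} {A L t T : ℝ} (ht : t ∈ Icc 0 T)
    (hφ : ∀ s ∈ Icc 0 t, φ s ≤ A) (hψ : ∀ s ∈ Icc 0 t, 0 ≤ ψ s ∧ ψ s ≤ L) :
    ∫ s in (0 : ℝ)..t, φ s * ψ s ≤ L * T * max A 0 := by
  have hL : 0 ≤ L := (hψ 0 ⟨le_rfl, ht.1⟩).1.trans (hψ 0 ⟨le_rfl, ht.1⟩).2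
  calc ∫ s in (0 : ℝ)..t, φ s * ψ s ≤ max A 0 * L * t := by
        refine intervalIntegral_le_mul_of_le ht.1 (by positivity) fun s hs => ?_
        calc φ s * ψ s ≤ max A 0 * ψ s :=
              mul_le_mul_of_nonneg_right ((hφ s hs).trans (le_max_left _ _)) (hψ s hs).1
          _ ≤ max A 0 * L := mul_le_mul_of_nonneg_left (hψ s hs).2 (le_max_right _ _)
    _ ≤ max A 0 * L * T := by gcongr; exact ht.2
    _ = L * T * max A 0 := by ring

lemma integral_comp_intervalIntegral_mul_le {γ T lb c t x : ℝ} {lam J' : ℝ → ℝ}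
    {h : ℝ → ℝ → ℝ} (hγ : 0 < γ) (hlam : ∀ v, 0 ≤ v → 0 ≤ lam v ∧ lam v ≤ lb)
    (hJmono : ∀ ⦃y z : ℝ⦄, 0 ≤ y → y ≤ z → J' y ≤ J' z) (hh : ∀ s, Measurable (h s))
    (hh0 : ∀ s v, 0 ≤ h s v) (hc : 0 ≤ c)
    (hhc : ∀ s ∈ Icc 0 t, expWeightedSqNorm γ (h s) ≤ ENNReal.ofReal (c ^ 2))
    (ht : t ∈ Icc 0 T) (hx : 0 ≤ x) :
    ∫ s in (0 : ℝ)..t, J' (∫ v in (0 : ℝ)..(t - s + x), lam v * h s v) * lam (t - s + x)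
      ≤ lb * T * max (J' (lb / √γ * c)) 0 := by
  have hw : ∀ s ∈ Icc 0 t, 0 ≤ t - s + x := fun s hs => by linarith [hs.2]
  refine intervalIntegral_mul_le_of_le ht (fun s hs => hJmono ?_ ?_) fun s hs => hlam _ (hw s hs)
  · exact intervalIntegral.integral_nonneg (hw s hs) fun v hv =>
      mul_nonneg (hlam v hv.1).1 (hh0 s v)
  · exact (le_abs_self _).trans <| abs_intervalIntegral_mul_le hγ
      (fun v hv => (abs_of_nonneg (hlam v hv).1).trans_le (hlam v hv).2) (hh s) hc (hhc s hs)
      (hw s hs)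

lemma exists_mul_exp_max_le {a C κ : ℝ} {J : ℝ → ℝ}
    (hJ : Filter.limsup (fun z : ℝ => ((Real.log z - a * J z : ℝ) : EReal)) Filter.atTop = ⊤)
    (hC : 0 < C) (hκ : 0 < κ) : ∃ c, 0 < c ∧ C * Real.exp (a * max (J (κ * c)) 0) ≤ c := by
  obtain ⟨z, hzC, hz⟩ : ∃ z, κ * C ≤ z ∧ Real.log (κ * C) ≤ Real.log z - a * J z := by
    by_contra! hc
    have hev : ∀ᶠ z in Filter.atTop, ((Real.log z - a * J z : ℝ) : EReal) ≤ Real.log (κ * C) := by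
      filter_upwards [Filter.eventually_ge_atTop (κ * C)] with z hz
      exact_mod_cast (hc z hz).le
    have hle := Filter.limsup_le_of_le (by isBoundedDefault) hev
    rw [hJ] at hle
    exact absurd hle (by simp)
  have hz0 : 0 < z := (mul_pos hκ hC).trans_le hzC
  refine ⟨z / κ, by positivity, ?_⟩
  rw [mul_div_cancel₀ _ hκ.ne', le_div_iff₀' hκ, ← mul_assoc]
  rcases le_total (J z) 0 with hJz | hJz
  · simpa [max_eq_right hJz] using hzC
  · calc κ * C * Real.exp (a * max (J z) 0) = Real.exp (Real.log (κ * C) + a * J z) := by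
          rw [max_eq_left hJz, Real.exp_add, Real.exp_log (by positivity)]
      _ ≤ Real.exp (Real.log z) := Real.exp_le_exp.2 (by linarith)
      _ = z := Real.exp_log hz0

theorem invariant_ball_for_K_general (γ T lb : ℝ) (hγ : 0 < γ) (hlb : 0 < lb)
    (lam : ℝ → ℝ)
    (hlam : ∀ x : ℝ, 0 ≤ x → 0 < lam x ∧ lam x ≤ lb)
    (J' : ℝ → ℝ) (hJmono : ∀ ⦃y z : ℝ⦄, 0 ≤ y → y ≤ z → J' y ≤ J' z)
    (hJlimsup : Filter.limsup
      (fun z : ℝ => ((Real.log z - lb * T * J' z : ℝ) : EReal)) Filter.atTop = ⊤)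
    (b : ℝ → ℝ → ℝ)
    (hb : ∃ B : ℝ, ∀ t ∈ Set.Icc 0 T, ∀ x ∈ Set.Ici (0 : ℝ), 0 < b t x ∧ b t x ≤ B)
    (r₀ : ℝ → ℝ)
    (hr₀L2 : ∫⁻ x in Set.Ioi (0 : ℝ), ENNReal.ofReal (r₀ x ^ 2 * Real.exp (γ * x)) < ⊤) :
    ∃ c₁ : ℝ, 0 < c₁ ∧
      ∀ h : ℝ → ℝ → ℝ, Measurable (Function.uncurry h) → (∀ t x, 0 ≤ h t x) →
        (∀ t ∈ Set.Icc 0 T,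
          ∫⁻ x in Set.Ioi (0 : ℝ), ENNReal.ofReal (h t x ^ 2 * Real.exp (γ * x))
            ≤ ENNReal.ofReal (c₁ ^ 2)) →
        ∀ t ∈ Set.Icc 0 T,
          ∫⁻ x in Set.Ioi (0 : ℝ), ENNReal.ofReal
            ((r₀ (t + x) * b t x * Real.exp (∫ s in (0 : ℝ)..t,
                J' (∫ v in (0 : ℝ)..(t - s + x), lam v * h s v) * lam (t - s + x))) ^ 2
              * Real.exp (γ * x)) ≤ ENNReal.ofReal (c₁ ^ 2) := by
  obtain ⟨B, hB⟩ := hb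
  set R := (expWeightedSqNorm γ r₀).toReal
  obtain ⟨c₁, hc₁0, hc₁⟩ := exists_mul_exp_max_le (C := |B| * √R + 1) (κ := lb / √γ) hJlimsup
    (by positivity) (by positivity)
  set E := Real.exp (lb * T * max (J' (lb / √γ * c₁)) 0)
  refine ⟨c₁, hc₁0, fun h hh hh0 hhc t ht => ?_⟩
  have hexp : ∀ x ∈ Ioi 0, |Real.exp (∫ s in (0 : ℝ)..t,
      J' (∫ v in (0 : ℝ)..(t - s + x), lam v * h s v) * lam (t - s + x))| ≤ E := fun x hx => by
    rw [abs_of_pos (Real.exp_pos _)]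
    exact Real.exp_le_exp.2 (integral_comp_intervalIntegral_mul_le hγ
      (fun v hv => ⟨(hlam v hv).1.le, (hlam v hv).2⟩) hJmono (fun s => hh.of_uncurry_left) hh0
      hc₁0.le (fun s hs => hhc s ⟨hs.1, hs.2.trans ht.2⟩) ht hx.out.le)
  have hbB : ∀ x ∈ Ioi 0, |b t x| ≤ B := fun x hx =>
    (abs_of_pos (hB t ht x (mem_Ici.2 hx.out.le)).1).trans_le (hB t ht x (mem_Ici.2 hx.out.le)).2
  calc expWeightedSqNorm γ (fun x => r₀ (t + x) * b t x * Real.exp (∫ s in (0 : ℝ)..t,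
        J' (∫ v in (0 : ℝ)..(t - s + x), lam v * h s v) * lam (t - s + x)))
      ≤ ENNReal.ofReal (E ^ 2) * (ENNReal.ofReal (B ^ 2) * expWeightedSqNorm γ r₀) := by
        refine (expWeightedSqNorm_mul_le hexp).trans ?_
        gcongr
        exact (expWeightedSqNorm_mul_le hbB).trans
          (by gcongr; exact expWeightedSqNorm_comp_add_le hγ.le ht.1)
    _ = ENNReal.ofReal ((|B| * √R * E) ^ 2) := by
        rw [← ENNReal.ofReal_toReal (show expWeightedSqNorm γ r₀ ≠ ⊤ from hr₀L2.ne),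
          ← ENNReal.ofReal_mul (sq_nonneg _), ← ENNReal.ofReal_mul (sq_nonneg _), mul_pow,
          mul_pow, sq_abs, Real.sq_sqrt ENNReal.toReal_nonneg]
        ring_nf
    _ ≤ ENNReal.ofReal (c₁ ^ 2) := by
        gcongr
        exact le_trans (by gcongr; linarith) hc₁

/-- Invariance of a ball of radius `c₁` in `L^{2,γ}_+` under the operator
`(𝒦h)(t,x) = r₀(t+x) b(t,x) exp(∫₀ᵗ J′(∫₀^{t−s+x} λ(v) h(s,v) dv) λ(t−s+x) ds)`,
provided `J′` is nondecreasing and `limsup_{z→∞} (ln z − λ̄ T* J′(z)) = +∞`. -/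
theorem invariant_ball_for_K (γ T lb : ℝ) (hγ : 0 < γ) (hT : 0 < T) (hlb : 0 < lb)
    (lam : ℝ → ℝ) (hlam_meas : Measurable lam)
    (hlam : ∀ x : ℝ, 0 ≤ x → 0 < lam x ∧ lam x ≤ lb)
    (J' : ℝ → ℝ) (hJmono : ∀ ⦃y z : ℝ⦄, 0 ≤ y → y ≤ z → J' y ≤ J' z)
    (hJlimsup : Filter.limsup
      (fun z : ℝ => ((Real.log z - lb * T * J' z : ℝ) : EReal)) Filter.atTop = ⊤)
    (b : ℝ → ℝ → ℝ) (hbmeas : Measurable (Function.uncurry b))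
    (hb : ∃ B : ℝ, ∀ t ∈ Set.Icc 0 T, ∀ x ∈ Set.Ici (0 : ℝ), 0 < b t x ∧ b t x ≤ B)
    (r₀ : ℝ → ℝ) (hr₀meas : Measurable r₀) (hr₀nn : ∀ x, 0 ≤ r₀ x)
    (hr₀L2 : ∫⁻ x in Set.Ioi (0 : ℝ), ENNReal.ofReal (r₀ x ^ 2 * Real.exp (γ * x)) < ⊤) :
    ∃ c₁ : ℝ, 0 < c₁ ∧
      ∀ h : ℝ → ℝ → ℝ, Measurable (Function.uncurry h) → (∀ t x, 0 ≤ h t x) →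
        (∀ t ∈ Set.Icc 0 T,
          ∫⁻ x in Set.Ioi (0 : ℝ), ENNReal.ofReal (h t x ^ 2 * Real.exp (γ * x))
            ≤ ENNReal.ofReal (c₁ ^ 2)) →
        ∀ t ∈ Set.Icc 0 T,
          ∫⁻ x in Set.Ioi (0 : ℝ), ENNReal.ofReal
            ((r₀ (t + x) * b t x * Real.exp (∫ s in (0 : ℝ)..t,
                J' (∫ v in (0 : ℝ)..(t - s + x), lam v * h s v) * lam (t - s + x))) ^ 2
              * Real.exp (γ * x)) ≤ ENNReal.ofReal (c₁ ^ 2) :=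
  invariant_ball_for_K_general γ T lb hγ hlb lam hlam J' hJmono hJlimsup b hb r₀ hr₀L2
end

section
/- Let γ > 0 and let λ : [0,∞) → ℝ be continuous with inf_{x≥0} λ(x) > 0 and sup_{x≥0} λ(x) < ∞, and let J′ : [0,∞) → ℝ be nondecreasing. For a nonnegative r ∈ L^{2,γ} define F(r)(x) := J′( ∫₀ˣ λ(v) r(v) dv ) · λ(x) · r(x). If there exists a constant c > 0 such that ‖F(r)‖_{L^{2,γ}} ≤ c (1 + ‖r‖_{L^{2,γ}}) for every nonnegative r ∈ L^{2,γ}, then J′ is bounded on [0,+∞). -/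
/-!
Test the linear-growth bound on the bumps `r = A · 𝟙_(0,1]`. Their norm grows only linearly in
`A`, while on `(1/2, 1]` the primitive `∫₀ˣ λ r` exceeds `λ₀ A / 2` (`λ₀ > 0` a lower bound of
`λ`), so by monotonicity `F(r) ≥ J′(λ₀ A / 2) λ₀ A` there. Comparing the two sides and dividing
by `A` bounds `J′(λ₀ A / 2)` uniformly in `A ≥ 1`; below `λ₀ / 2` monotonicity bounds `J′` by its
values at `0` and `λ₀ / 2`.
-/

open MeasureTheory

open Set Real

noncomputable def driftTransform (lam J' r : ℝ → ℝ) (x : ℝ) : ℝ :=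
  J' (∫ v in (0 : ℝ)..x, lam v * r v) * lam x * r x

def DriftHasLinearGrowth (γ : ℝ) (lam J' : ℝ → ℝ) (c : ℝ) : Prop :=
  ∀ r : ℝ → ℝ, Measurable r → (∀ x, 0 ≤ r x) → L2gammaNorm γ r ≠ ⊤ →
    L2gammaNorm γ (driftTransform lam J' r) ≤ ENNReal.ofReal c * (1 + L2gammaNorm γ r)

lemma ENNReal.ofReal_sq_rpow_half {x : ℝ} (hx : 0 ≤ x) :
    ENNReal.ofReal (x ^ 2) ^ ((1 : ℝ) / 2) = ENNReal.ofReal x := by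
  rw [ENNReal.ofReal_pow hx, ← ENNReal.rpow_natCast, ← ENNReal.rpow_mul]
  norm_num

lemma L2gammaNorm_indicator_Ioc_le {γ A : ℝ} (hγ : 0 ≤ γ) (hA : 0 ≤ A) :
    L2gammaNorm γ ((Ioc 0 1).indicator fun _ => A) ≤ ENNReal.ofReal (A * exp (γ / 2)) := by
  have hsq : (A * exp (γ / 2)) ^ 2 = A ^ 2 * exp γ := by
    rw [mul_pow, ← exp_nat_mul]; ring_nf
  rw [L2gammaNorm, ← ENNReal.ofReal_sq_rpow_half (by positivity), hsq]
  refine ENNReal.rpow_le_rpow ?_ (by norm_num)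
  calc ∫⁻ x in Ioi 0, ENNReal.ofReal ((Ioc 0 1).indicator (fun _ => A) x ^ 2 * exp (γ * x))
      ≤ ∫⁻ x : ℝ, (Ioc 0 1).indicator (fun _ => ENNReal.ofReal (A ^ 2 * exp γ)) x := by
        refine (setLIntegral_le_lintegral _ _).trans (lintegral_mono fun x => ?_)
        by_cases hx : x ∈ Ioc 0 1
        · simp only [indicator_of_mem hx]
          gcongr
          nlinarith [hx.2]
        · simp [indicator_of_notMem hx]
    _ = ENNReal.ofReal (A ^ 2 * exp γ) := by
        simp [lintegral_indicator_const measurableSet_Ioc]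

lemma ofReal_mul_sqrt_le_L2gammaNorm {γ a b P : ℝ} {f : ℝ → ℝ} (hγ : 0 ≤ γ) (ha : 0 ≤ a)
    (hab : a ≤ b) (hP : 0 ≤ P) (hf : ∀ x ∈ Ioc a b, P ≤ f x) :
    ENNReal.ofReal (P * √(b - a)) ≤ L2gammaNorm γ f := by
  have hsq : (P * √(b - a)) ^ 2 = P ^ 2 * (b - a) := by
    rw [mul_pow, sq_sqrt (sub_nonneg.mpr hab)]
  rw [L2gammaNorm, ← ENNReal.ofReal_sq_rpow_half (by positivity), hsq]
  refine ENNReal.rpow_le_rpow ?_ (by norm_num)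
  calc ENNReal.ofReal (P ^ 2 * (b - a))
      = ∫⁻ _ in Ioc a b, ENNReal.ofReal (P ^ 2) := by
        rw [setLIntegral_const, Real.volume_Ioc, ENNReal.ofReal_mul (sq_nonneg P)]
    _ ≤ ∫⁻ x in Ioc a b, ENNReal.ofReal (f x ^ 2 * exp (γ * x)) := by
        refine setLIntegral_mono' measurableSet_Ioc fun x hx => ?_
        have hx0 : 0 ≤ x := ha.trans hx.1.le
        have hexp : 1 ≤ exp (γ * x) := one_le_exp (mul_nonneg hγ hx0)
        have hfx : P ^ 2 ≤ f x ^ 2 := pow_le_pow_left₀ hP (hf x hx) 2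
        gcongr
        nlinarith [sq_nonneg (f x)]
    _ ≤ ∫⁻ x in Ioi 0, ENNReal.ofReal (f x ^ 2 * exp (γ * x)) :=
        lintegral_mono_set fun x hx => ha.trans_lt hx.1

section Drift

variable {γ la c A : ℝ} {lam J' : ℝ → ℝ}

lemma le_driftTransform_indicator_Ioc (hlam : Continuous lam) (hla : ∀ x, 0 ≤ x → la ≤ lam x)
    (hla0 : 0 ≤ la) (hmono : MonotoneOn J' (Ici 0)) (hA : 0 ≤ A) {t : ℝ} (ht : 0 < t)
    (hJ : 0 ≤ J' (la * A * t)) :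
    ∀ x ∈ Ioc t 1,
      J' (la * A * t) * la * A ≤ driftTransform lam J' ((Ioc 0 1).indicator fun _ => A) x := by
  intro x hx
  have hx0 : 0 < x := ht.trans hx.1
  have hprimitive : ∫ v in (0 : ℝ)..x, lam v * (Ioc 0 1).indicator (fun _ => A) v
      = (∫ v in (0 : ℝ)..x, lam v) * A := by
    rw [← intervalIntegral.integral_mul_const]
    refine intervalIntegral.integral_congr_ae (Filter.Eventually.of_forall fun v hv => ?_)
    rw [uIoc_of_le hx0.le] at hv
    rw [indicator_of_mem (s := Ioc (0 : ℝ) 1) ⟨hv.1, hv.2.trans hx.2⟩]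
  have hlam_int : la * x ≤ ∫ v in (0 : ℝ)..x, lam v := by
    have h := intervalIntegral.integral_mono_on hx0.le (intervalIntegrable_const (μ := volume))
      (hlam.intervalIntegrable 0 x) fun v hv => hla v hv.1
    rwa [intervalIntegral.integral_const, sub_zero, smul_eq_mul, mul_comm] at h
  have harg : la * A * t ≤ ∫ v in (0 : ℝ)..x, lam v * (Ioc 0 1).indicator (fun _ => A) v := by
    rw [hprimitive]
    nlinarith [mul_le_mul_of_nonneg_left hx.1.le hla0]
  have hlow : 0 ≤ la * A * t := by positivity
  have hJx := hmono (mem_Ici.mpr hlow) (mem_Ici.mpr (hlow.trans harg)) harg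
  rw [driftTransform, indicator_of_mem (s := Ioc (0 : ℝ) 1) ⟨hx0, hx.2⟩]
  gcongr
  · exact hJ.trans hJx
  · exact hla x hx0.le

lemma jprime_mul_le_of_linear_growth (hγ : 0 ≤ γ) (hlam : Continuous lam)
    (hla : ∀ x, 0 ≤ x → la ≤ lam x) (hla0 : 0 ≤ la) (hmono : MonotoneOn J' (Ici 0)) (hc : 0 ≤ c)
    (hlin : DriftHasLinearGrowth γ lam J' c)
    (hA : 0 ≤ A) (hJ : 0 ≤ J' (la * A * (1 / 2))) :
    J' (la * A * (1 / 2)) * la * A * √(1 / 2) ≤ c * (1 + A * exp (γ / 2)) := by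
  set r := (Ioc (0 : ℝ) 1).indicator fun _ => A
  have hr_norm := L2gammaNorm_indicator_Ioc_le hγ hA
  have hr_nonneg : ∀ x, 0 ≤ r x := fun x => indicator_nonneg (fun _ _ => hA) x
  have hF := ofReal_mul_sqrt_le_L2gammaNorm hγ (by norm_num) (by norm_num) (by positivity)
    (le_driftTransform_indicator_Ioc hlam hla hla0 hmono hA (by norm_num) hJ)
  rw [show (1 : ℝ) - 1 / 2 = 1 / 2 by norm_num] at hF
  have hlin_r := hlin r (measurable_const.indicator measurableSet_Ioc) hr_nonneg
    (ne_top_of_le_ne_top ENNReal.ofReal_ne_top hr_norm)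
  refine (ENNReal.ofReal_le_ofReal_iff (by positivity)).mp (hF.trans (hlin_r.trans ?_))
  rw [ENNReal.ofReal_mul hc, ENNReal.ofReal_add zero_le_one (by positivity), ENNReal.ofReal_one]
  gcongr

lemma jprime_le_of_linear_growth (hγ : 0 ≤ γ) (hlam : Continuous lam)
    (hla : ∀ x, 0 ≤ x → la ≤ lam x) (hla0 : 0 < la) (hmono : MonotoneOn J' (Ici 0)) (hc : 0 ≤ c)
    (hlin : DriftHasLinearGrowth γ lam J' c)
    {z : ℝ} (hz : la / 2 ≤ z) :
    J' z ≤ c * (1 + exp (γ / 2)) / (la * √(1 / 2)) := by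
  have hbound_nonneg : 0 ≤ c * (1 + exp (γ / 2)) / (la * √(1 / 2)) := by positivity
  rcases le_or_gt (J' z) 0 with hJ | hJ
  · exact hJ.trans hbound_nonneg
  set A := 2 * z / la
  have hA : 1 ≤ A := by rw [le_div_iff₀ hla0]; linarith
  have hzA : la * A * (1 / 2) = z := by
    rw [mul_div_cancel₀ _ hla0.ne']
    ring
  have key := jprime_mul_le_of_linear_growth hγ hlam hla hla0.le hmono hc hlin
    (zero_le_one.trans hA) (hzA ▸ hJ.le)
  rw [hzA] at key
  rw [le_div_iff₀ (by positivity)]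
  have hsqrt : 0 < √(1 / 2 : ℝ) := by positivity
  nlinarith [mul_le_mul_of_nonneg_left (sub_nonneg.mpr hA) (mul_nonneg hc (exp_pos (γ / 2)).le)]

end Drift

lemma abs_le_max_of_monotoneOn_Ici {f : ℝ → ℝ} (hf : MonotoneOn f (Ici 0)) {z₀ K : ℝ}
    (hz₀ : 0 ≤ z₀) (hK : ∀ z, z₀ ≤ z → f z ≤ K) : ∀ z, 0 ≤ z → |f z| ≤ max K |f 0| := by
  intro z hz
  have hlower : f 0 ≤ f z := hf (mem_Ici.mpr le_rfl) (mem_Ici.mpr hz) hz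
  have hupper : f z ≤ K := by
    rcases le_total z₀ z with h | h
    · exact hK z h
    · exact (hf (mem_Ici.mpr hz) (mem_Ici.mpr hz₀) h).trans (hK z₀ le_rfl)
  rw [abs_le]
  constructor
  · linarith [neg_abs_le (f 0), le_max_right K |f 0|]
  · linarith [le_max_left K |f 0|]

theorem jprime_bounded_of_linear_growth_general (γ : ℝ) (hγ : 0 < γ)
    (lam : ℝ → ℝ) (hlam_cont : Continuous lam)
    (hinf : ∃ la : ℝ, 0 < la ∧ ∀ x : ℝ, 0 ≤ x → la ≤ lam x)
    (J' : ℝ → ℝ) (hJmono : ∀ ⦃y z : ℝ⦄, 0 ≤ y → y ≤ z → J' y ≤ J' z)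
    (c : ℝ) (hc : 0 < c)
    (hlin : ∀ r : ℝ → ℝ, Measurable r → (∀ x, 0 ≤ r x) → L2gammaNorm γ r ≠ ⊤ →
      L2gammaNorm γ (fun x => J' (∫ v in (0 : ℝ)..x, lam v * r v) * lam x * r x)
        ≤ ENNReal.ofReal c * (1 + L2gammaNorm γ r)) :
    ∃ C : ℝ, ∀ z : ℝ, 0 ≤ z → |J' z| ≤ C := by
  obtain ⟨la, hla0, hla⟩ := hinf
  have hmono : MonotoneOn J' (Ici 0) := fun y hy _ _ hyz => hJmono hy hyz
  exact ⟨_, abs_le_max_of_monotoneOn_Ici hmono (by positivity) fun z hz =>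
    jprime_le_of_linear_growth hγ.le hlam_cont hla hla0 hmono hc.le hlin hz⟩

/-- If the drift transformation `F(r)(x) = J′(∫₀ˣ λ(v) r(v) dv) λ(x) r(x)` has linear
growth on the positive cone of `L^{2,γ}`, then `J′` is bounded on `[0,∞)`. -/
theorem jprime_bounded_of_linear_growth (γ : ℝ) (hγ : 0 < γ)
    (lam : ℝ → ℝ) (hlam_cont : Continuous lam)
    (hinf : ∃ la : ℝ, 0 < la ∧ ∀ x : ℝ, 0 ≤ x → la ≤ lam x)
    (hsup : ∃ lb : ℝ, ∀ x : ℝ, 0 ≤ x → lam x ≤ lb)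
    (J' : ℝ → ℝ) (hJmono : ∀ ⦃y z : ℝ⦄, 0 ≤ y → y ≤ z → J' y ≤ J' z)
    (c : ℝ) (hc : 0 < c)
    (hlin : ∀ r : ℝ → ℝ, Measurable r → (∀ x, 0 ≤ r x) → L2gammaNorm γ r ≠ ⊤ →
      L2gammaNorm γ (fun x => J' (∫ v in (0 : ℝ)..x, lam v * r v) * lam x * r x)
        ≤ ENNReal.ofReal c * (1 + L2gammaNorm γ r)) :
    ∃ C : ℝ, ∀ z : ℝ, 0 ≤ z → |J' z| ≤ C :=
  jprime_bounded_of_linear_growth_general γ hγ lam hlam_cont hinf J' hJmono c hc hlin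
end
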